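/- arXiv:1007.4263 — 6 statements merged into one kernel-verified Lean document; each statement's English description precedes it below -/
import Mathlib

section
/- For any graph G, positive integer k, and disjoint subsets D, S of V(G), the quantity \delta_G(D,S) = k|D| + \sum_{x \in S} d_G(x) - k|S| - e_G(D,S) - q_G(D,S;k) satisfies \delta_G(D,S) \equiv k|V(G)| (mod 2). -/
noncomputable section

open Finset

universe u

variable {V : Type u}

/-- Degree of a vertex `v` in `G`. -/
def deg (G : SimpleGraph V) (v : V) : ℕ := {u | G.Adj v u}.ncard

/-- For disjoint `A B`, the number of edges of `G` with one endpoint in `A`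
and the other in `B` (counted as ordered pairs from `A` to `B`). -/
def eBetween (G : SimpleGraph V) (A B : Set V) : ℕ :=
  {p : V × V | G.Adj p.1 p.2 ∧ p.1 ∈ A ∧ p.2 ∈ B}.ncard

/-- Number of edges of `G` with both endpoints in `A`. -/
def eInside (G : SimpleGraph V) (A : Set V) : ℕ :=
  {e : Sym2 V | e ∈ G.edgeSet ∧ ∀ v ∈ e, v ∈ A}.ncard

/-- Degree of `x` in the vertex-deleted graph `G - D`. -/
def degDel (G : SimpleGraph V) (D : Set V) (x : V) : ℕ :=
  {u | G.Adj x u ∧ u ∉ D}.ncard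

/-- `G` has a `k`-factor: a spanning subgraph in which every vertex has degree `k`. -/
def HasFactor (G : SimpleGraph V) (k : ℕ) : Prop :=
  ∃ H : SimpleGraph V, H ≤ G ∧ ∀ v, deg H v = k

/-- The vertex-deleted graph `G - u` has a `k`-factor. -/
def HasFactorDel (G : SimpleGraph V) (u : V) (k : ℕ) : Prop :=
  HasFactor (G.induce {v : V | v ≠ u}) k

/-- `q_G(D,S;k)`: the number of components `C` of `G - (D ∪ S)` such that
`e_G(V(C), S) + k * |V(C)|` is odd. -/
def qCount (G : SimpleGraph V) (D S : Set V) (k : ℕ) : ℕ :=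
  {C : (G.induce (D ∪ S)ᶜ).ConnectedComponent |
    Odd (eBetween G (Subtype.val '' C.supp) S + k * (Subtype.val '' C.supp).ncard)}.ncard

/-- Number of odd components of `G - S`. -/
def oddComponents (G : SimpleGraph V) (S : Set V) : ℕ :=
  {C : (G.induce Sᶜ).ConnectedComponent | Odd C.supp.ncard}.ncard

/-- Number of components of `G - S`. -/
def numComponents (G : SimpleGraph V) (S : Set V) : ℕ :=
  Nat.card (G.induce Sᶜ).ConnectedComponent

/-- `G` is `d`-regular (every vertex has degree `d`). -/
def IsRegularDeg (G : SimpleGraph V) (d : ℕ) : Prop := ∀ v, deg G v = d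

/-- `G` is `ℓ`-edge-connected: `G` is connected and stays connected after
deleting any set of fewer than `ℓ` edges. -/
def EdgeConnected (G : SimpleGraph V) (ℓ : ℕ) : Prop :=
  G.Connected ∧ ∀ F : Set (Sym2 V), F ⊆ G.edgeSet → F.ncard < ℓ →
    (G.deleteEdges F).Connected

section Aux

lemma aux_eBetween_comm (G : SimpleGraph V) (A B : Set V) :
    eBetween G A B = eBetween G B A := by
  rw [eBetween, eBetween]
  have h : {p : V × V | G.Adj p.1 p.2 ∧ p.1 ∈ A ∧ p.2 ∈ B}
      = Prod.swap '' {p : V × V | G.Adj p.1 p.2 ∧ p.1 ∈ B ∧ p.2 ∈ A} := by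
    ext ⟨a, b⟩
    simp only [Set.mem_setOf_eq, Set.mem_image, Prod.exists, Prod.swap_prod_mk, Prod.mk.injEq]
    constructor
    · rintro ⟨hadj, ha, hb⟩; exact ⟨b, a, ⟨hadj.symm, hb, ha⟩, rfl, rfl⟩
    · rintro ⟨x, y, ⟨hadj, hx, hy⟩, rfl, rfl⟩; exact ⟨hadj.symm, hy, hx⟩
  rw [h, Set.ncard_image_of_injective _ Prod.swap_injective]

lemma aux_natCast_zmod_two (n : ℕ) : (n : ZMod 2) = if Odd n then 1 else 0 := by
  rcases Nat.even_or_odd n with h | h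
  · rw [if_neg (Nat.not_odd_iff_even.mpr h), ← ZMod.natCast_mod, Nat.even_iff.mp h,
      Nat.cast_zero]
  · rw [if_pos h, ← ZMod.natCast_mod, Nat.odd_iff.mp h, Nat.cast_one]

open scoped Classical in
lemma aux_card_odd_filter {ι : Type*} [Fintype ι] (f : ι → ℕ) :
    (({i | Odd (f i)}.ncard : ℕ) : ZMod 2) = ∑ i, ((f i : ℕ) : ZMod 2) := by
  classical
  rw [Set.ncard_eq_toFinset_card _ (Set.toFinite _)]
  have h : {i | Odd (f i)}.toFinite.toFinset = Finset.univ.filter (fun i => Odd (f i)) := by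
    ext i; simp
  rw [h, Finset.card_filter]
  push_cast
  refine Finset.sum_congr rfl fun i _ => ?_
  rw [aux_natCast_zmod_two]

variable [Fintype V]

lemma aux_eBetween_eq_sum (G : SimpleGraph V) (A B : Set V) :
    eBetween G A B = ∑ v ∈ A.toFinite.toFinset, {u | G.Adj v u ∧ u ∈ B}.ncard := by
  classical
  rw [eBetween, Set.ncard_eq_toFinset_card _ (Set.toFinite _)]
  rw [Finset.card_eq_sum_card_fiberwise (f := Prod.fst) (t := A.toFinite.toFinset)
    (fun p hp => by simp only [Finset.mem_coe, Set.Finite.mem_toFinset, Set.mem_setOf_eq] at hp ⊢; exact hp.2.1)]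
  refine Finset.sum_congr rfl fun v hv => ?_
  simp only [Set.Finite.mem_toFinset] at hv
  rw [Set.ncard_eq_toFinset_card _ (Set.toFinite _)]
  refine Finset.card_bij (fun p _ => p.2) ?_ ?_ ?_
  · rintro ⟨a, b⟩ hp
    simp only [Finset.mem_filter, Set.Finite.mem_toFinset, Set.mem_setOf_eq] at hp
    obtain ⟨⟨hadj, _, hB⟩, (rfl : a = v)⟩ := hp
    simp only [Set.Finite.mem_toFinset, Set.mem_setOf_eq]
    exact ⟨hadj, hB⟩
  · rintro ⟨a, b⟩ h1 ⟨c, d⟩ h2 (h : b = d)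
    simp only [Finset.mem_filter] at h1 h2
    have ha : a = v := h1.2
    have hc : c = v := h2.2
    subst h ha hc; rfl
  · intro u hu
    simp only [Set.Finite.mem_toFinset, Set.mem_setOf_eq] at hu
    exact ⟨(v, u), Finset.mem_filter.mpr
      ⟨(Set.Finite.mem_toFinset _).mpr ⟨hu.1, hv, hu.2⟩, rfl⟩, rfl⟩

lemma aux_eBetween_self_even (G : SimpleGraph V) (S : Set V) :
    ((eBetween G S S : ℕ) : ZMod 2) = 0 := by
  classical
  rw [eBetween, Set.ncard_eq_toFinset_card _ (Set.toFinite _), Finset.card_eq_sum_ones]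
  push_cast
  refine Finset.sum_involution (fun p _ => Prod.swap p) (fun a ha => by decide) ?_ ?_ ?_
  · intro p hp _
    simp only [Set.Finite.mem_toFinset, Set.mem_setOf_eq] at hp
    exact fun h => hp.1.ne (congrArg Prod.fst h).symm
  · intro p hp
    simp only [Set.Finite.mem_toFinset, Set.mem_setOf_eq] at hp ⊢
    exact ⟨hp.1.symm, hp.2.2, hp.2.1⟩
  · intro p _; exact Prod.swap_swap p

lemma aux_sum_over_components (G : SimpleGraph V) (T : Set V) (g : V → ℕ)
    [Fintype (G.induce T).ConnectedComponent] :
    ∑ C : (G.induce T).ConnectedComponent,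
        ∑ v ∈ (Subtype.val '' C.supp).toFinite.toFinset, g v
      = ∑ v ∈ T.toFinite.toFinset, g v := by
  classical
  have h1 : ∑ v ∈ T.toFinite.toFinset, g v = ∑ x : T, g x.val :=
    Finset.sum_subtype T.toFinite.toFinset (fun x => T.toFinite.mem_toFinset) g
  rw [h1, ← Finset.sum_fiberwise Finset.univ
      (fun x : T => (G.induce T).connectedComponentMk x) (fun x : T => g x.val)]
  refine Finset.sum_congr rfl fun C _ => ?_
  refine (Finset.sum_bij (fun (x : T) (_ : x ∈ Finset.univ.filter
      (fun y : T => (G.induce T).connectedComponentMk y = C)) => (x : V)) ?_ ?_ ?_ ?_).symm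
  · intro x hx
    simp only [Finset.mem_filter, Finset.mem_univ, true_and] at hx
    simp only [Set.Finite.mem_toFinset, Set.mem_image]
    exact ⟨x, hx, rfl⟩
  · intro a _ b _ h; exact Subtype.ext h
  · intro v hv
    simp only [Set.Finite.mem_toFinset, Set.mem_image] at hv
    obtain ⟨x, hx, rfl⟩ := hv
    exact ⟨x, Finset.mem_filter.mpr ⟨Finset.mem_univ _, hx⟩, rfl⟩
  · intro x _; rfl

end Aux

set_option maxHeartbeats 1000000 in
/-- The deficiency `δ_G(D,S)` in Tutte's k-factor theorem satisfies
`δ_G(D,S) ≡ k |V(G)| (mod 2)`. -/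
theorem deficiency_parity {V : Type u} [Fintype V] (G : SimpleGraph V) (k : ℕ) (hk : 0 < k)
    (D S : Set V) (hDS : Disjoint D S) :
    ((k : ℤ) * D.ncard + ∑ x ∈ S.toFinite.toFinset, (deg G x : ℤ)
        - (k : ℤ) * S.ncard - eBetween G D S - qCount G D S k) % 2
      = ((k : ℤ) * Fintype.card V) % 2 := by
  classical
  -- cardinality fact
  have hcard : D.ncard + S.ncard + (D ∪ S)ᶜ.ncard = Fintype.card V := by
    rw [← Set.ncard_union_eq hDS (Set.toFinite _) (Set.toFinite _),
      Set.ncard_add_ncard_compl, Nat.card_eq_fintype_card]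
  -- degree sum fact
  have hdeg : ∑ x ∈ S.toFinite.toFinset, deg G x
      = eBetween G S D + eBetween G S S + eBetween G S (D ∪ S)ᶜ := by
    rw [aux_eBetween_eq_sum G S D, aux_eBetween_eq_sum G S S, aux_eBetween_eq_sum G S (D ∪ S)ᶜ,
      ← Finset.sum_add_distrib, ← Finset.sum_add_distrib]
    refine Finset.sum_congr rfl fun v hv => ?_
    have hsplit : {u | G.Adj v u} = ({u | G.Adj v u ∧ u ∈ D} ∪ {u | G.Adj v u ∧ u ∈ S})
        ∪ {u | G.Adj v u ∧ u ∈ (D ∪ S)ᶜ} := by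
      ext u
      simp only [Set.mem_setOf_eq, Set.mem_union, Set.mem_compl_iff]
      by_cases hD : u ∈ D <;> by_cases hS : u ∈ S <;> tauto
    have d1 : Disjoint {u | G.Adj v u ∧ u ∈ D} {u | G.Adj v u ∧ u ∈ S} := by
      rw [Set.disjoint_left]
      rintro x ⟨_, hx⟩ ⟨_, hx'⟩
      exact Set.disjoint_left.mp hDS hx hx'
    have d2 : Disjoint ({u | G.Adj v u ∧ u ∈ D} ∪ {u | G.Adj v u ∧ u ∈ S})
        {u | G.Adj v u ∧ u ∈ (D ∪ S)ᶜ} := by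
      rw [Set.disjoint_left]
      rintro x hx ⟨_, hx'⟩
      rcases hx with ⟨_, h⟩ | ⟨_, h⟩
      · exact hx' (Or.inl h)
      · exact hx' (Or.inr h)
    rw [deg, hsplit, Set.ncard_union_eq d2 (Set.toFinite _) (Set.toFinite _),
      Set.ncard_union_eq d1 (Set.toFinite _) (Set.toFinite _)]
  -- component sum facts
  have h2 : ∑ C : (G.induce (D ∪ S)ᶜ).ConnectedComponent,
      eBetween G (Subtype.val '' C.supp) S = eBetween G (D ∪ S)ᶜ S := by
    rw [aux_eBetween_eq_sum G (D ∪ S)ᶜ S,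
      ← aux_sum_over_components G (D ∪ S)ᶜ (fun v => {u | G.Adj v u ∧ u ∈ S}.ncard)]
    exact Finset.sum_congr rfl fun C _ => aux_eBetween_eq_sum G _ S
  have h3 : ∑ C : (G.induce (D ∪ S)ᶜ).ConnectedComponent,
      (Subtype.val '' C.supp).ncard = (D ∪ S)ᶜ.ncard := by
    have h := aux_sum_over_components G (D ∪ S)ᶜ (fun _ => 1)
    simp only [Finset.sum_const, smul_eq_mul, mul_one] at h
    calc ∑ C : (G.induce (D ∪ S)ᶜ).ConnectedComponent, (Subtype.val '' C.supp).ncard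
        = ∑ C : (G.induce (D ∪ S)ᶜ).ConnectedComponent,
            (Subtype.val '' C.supp).toFinite.toFinset.card :=
          Finset.sum_congr rfl fun C _ => Set.ncard_eq_toFinset_card _ (Set.toFinite _)
      _ = (D ∪ S)ᶜ.toFinite.toFinset.card := h
      _ = (D ∪ S)ᶜ.ncard := (Set.ncard_eq_toFinset_card _ (Set.toFinite _)).symm
  -- qCount parity
  have hq : ((qCount G D S k : ℕ) : ZMod 2)
      = ((eBetween G (D ∪ S)ᶜ S : ℕ) : ZMod 2) + (k : ZMod 2) * (((D ∪ S)ᶜ.ncard : ℕ) : ZMod 2) := by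
    rw [qCount, aux_card_odd_filter]
    simp only [Nat.cast_add, Nat.cast_mul, Finset.sum_add_distrib, ← Finset.mul_sum,
      ← Nat.cast_sum]
    rw [h2, h3]
  -- reduce to ZMod 2
  have key : ∀ a b : ℤ, ((a : ZMod 2) = (b : ZMod 2)) → a % 2 = b % 2 := fun a b h =>
    (ZMod.intCast_eq_intCast_iff a b 2).mp h
  apply key
  push_cast
  rw [← Nat.cast_sum S.toFinite.toFinset (deg G), hdeg]
  rw [hq]
  rw [aux_eBetween_comm G S D, aux_eBetween_comm G S (D ∪ S)ᶜ]
  push_cast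
  rw [show ((eBetween G S S : ℕ) : ZMod 2) = 0 from aux_eBetween_self_even G S]
  have hn : ((D.ncard : ZMod 2) + (S.ncard : ZMod 2) + ((D ∪ S)ᶜ.ncard : ZMod 2))
      = ((Fintype.card V : ℕ) : ZMod 2) := by
    rw [← Nat.cast_add, ← Nat.cast_add, hcard]
  have h2z : (2 : ZMod 2) = 0 := rfl
  linear_combination (k : ZMod 2) * hn
    - ((k : ZMod 2) * ((S.ncard : ℕ) : ZMod 2)
        + (k : ZMod 2) * ((((D ∪ S)ᶜ : Set V).ncard : ℕ) : ZMod 2)) * h2z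
end
end

section
/- Let G be a 2r-regular, 2r-edge-connected graph of odd order. Then for every vertex u of G, the graph G - u has a 1-factor. -/
noncomputable section

open Finset

universe u

variable {V : Type u}

variable {W : Type u}

open scoped Classical in
lemma ncard_setOf_fintype {α : Type*} [Fintype α] (p : α → Prop) :
    {x | p x}.ncard = (Finset.univ.filter p).card := by
  rw [Set.ncard_eq_toFinset_card']
  congr 1
  ext x
  simp

lemma card_filter_odd_mod_two {ι : Type*} (s : Finset ι) (f : ι → ℕ) :
    (s.filter (fun i => Odd (f i))).card % 2 = (∑ i ∈ s, f i) % 2 := by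
  classical
  rw [Finset.card_filter, Finset.sum_nat_mod s 2 f]
  congr 1
  refine Finset.sum_congr rfl fun i _ => ?_
  by_cases h : Odd (f i)
  · simp [h, Nat.odd_iff.mp h]
  · simp [h, Nat.even_iff.mp (Nat.not_odd_iff_even.mp h)]

namespace TutteAux

variable (H : SimpleGraph W)

/-- Vertex sets (in the ambient type) of connected components of `H.induce B`. -/
def compImages (B : Set W) : Set (Set W) :=
  Set.range (fun C : (H.induce B).ConnectedComponent => Subtype.val '' C.supp)

def oddImages (B : Set W) : Set (Set W) := {D | D ∈ compImages H B ∧ Odd D.ncard}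

noncomputable def qs (B : Set W) : ℕ := (oddImages H B).ncard

variable {H}

lemma subset_of_mem_compImages {B D : Set W} (h : D ∈ compImages H B) : D ⊆ B := by
  obtain ⟨C, rfl⟩ := h
  rintro x ⟨y, -, rfl⟩
  exact y.2

lemma nonempty_of_mem_compImages {B D : Set W} (h : D ∈ compImages H B) : D.Nonempty := by
  obtain ⟨C, rfl⟩ := h
  obtain ⟨a, ha⟩ := C.exists_rep
  exact ⟨a.1, a, (SimpleGraph.ConnectedComponent.mem_supp_iff _ _).mpr ha, rfl⟩

lemma mem_compImages_self {B : Set W} {x : W} (hx : x ∈ B) :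
    x ∈ Subtype.val '' ((H.induce B).connectedComponentMk ⟨x, hx⟩).supp :=
  ⟨⟨x, hx⟩, (SimpleGraph.ConnectedComponent.mem_supp_iff _ _).mpr rfl, rfl⟩

lemma closed_of_mem_compImages {B D : Set W} (h : D ∈ compImages H B) :
    ∀ x ∈ D, ∀ y ∈ B, H.Adj x y → y ∈ D := by
  obtain ⟨C, rfl⟩ := h
  rintro x ⟨⟨x, hxB⟩, hxC, rfl⟩ y hyB hadj
  refine ⟨⟨y, hyB⟩, ?_, rfl⟩
  rw [SimpleGraph.ConnectedComponent.mem_supp_iff] at hxC ⊢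
  rw [← hxC]
  exact SimpleGraph.ConnectedComponent.connectedComponentMk_eq_of_adj
    (by simp only [SimpleGraph.comap_adj, Function.Embedding.coe_subtype]; exact hadj.symm :
      (H.induce B).Adj ⟨y, hyB⟩ ⟨x, hxB⟩)

lemma eq_image_of_mem {B D : Set W} (h : D ∈ compImages H B) {x : W} (hx : x ∈ D)
    (hxB : x ∈ B) :
    D = Subtype.val '' ((H.induce B).connectedComponentMk ⟨x, hxB⟩).supp := by
  obtain ⟨C, rfl⟩ := h
  obtain ⟨p, hp, hpe⟩ := hx
  rw [SimpleGraph.ConnectedComponent.mem_supp_iff] at hp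
  have : p = ⟨x, hxB⟩ := Subtype.ext hpe
  rw [← hp, this]

lemma disjoint_of_ne_compImages {B D₁ D₂ : Set W} (h1 : D₁ ∈ compImages H B)
    (h2 : D₂ ∈ compImages H B) (hne : D₁ ≠ D₂) : Disjoint D₁ D₂ := by
  rw [Set.disjoint_left]
  intro x hx1 hx2
  exact hne ((eq_image_of_mem h1 hx1 (subset_of_mem_compImages h1 hx1)).trans
    (eq_image_of_mem h2 hx2 (subset_of_mem_compImages h2 hx2)).symm)

/-- Walks in `H.induce B` starting in a closed subset `D` stay in `D` and
descend to `H.induce D`. -/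
lemma walk_stay {B D : Set W} (hDB : D ⊆ B)
    (hcl : ∀ x ∈ D, ∀ y ∈ B, H.Adj x y → y ∈ D) :
    ∀ {a b : ↥B} (_ : (H.induce B).Walk a b) (ha : a.1 ∈ D),
      ∃ hb : b.1 ∈ D, (H.induce D).Reachable ⟨a.1, ha⟩ ⟨b.1, hb⟩ := by
  intro a b w
  induction w with
  | nil => exact fun ha => ⟨ha, by rfl⟩
  | @cons x y z h p ih =>
    intro ha
    have hadj : H.Adj x.1 y.1 := by simpa using h
    have hyD : y.1 ∈ D := hcl x.1 ha y.1 y.2 hadj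
    obtain ⟨hb, hr⟩ := ih hyD
    exact ⟨hb, SimpleGraph.Reachable.trans
      (SimpleGraph.Adj.reachable
        (by simpa using hadj : (H.induce D).Adj ⟨x.1, ha⟩ ⟨y.1, hyD⟩)) hr⟩

lemma reachable_mono {B D : Set W} (hDB : D ⊆ B) {x y : W} (hx : x ∈ D) (hy : y ∈ D)
    (h : (H.induce D).Reachable ⟨x, hx⟩ ⟨y, hy⟩) :
    (H.induce B).Reachable ⟨x, hDB hx⟩ ⟨y, hDB hy⟩ := by
  have := h.map (SimpleGraph.induceHom (SimpleGraph.Hom.id) (fun x hx => hDB hx))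
  exact this

/-- Core transfer lemma: a component image transfers between ambient sets
as long as it is contained and closed. -/
lemma compImages_transfer {B₁ B₂ D : Set W} (h1 : D ∈ compImages H B₁)
    (hsub : D ⊆ B₂) (hcl : ∀ x ∈ D, ∀ y ∈ B₂, H.Adj x y → y ∈ D) :
    D ∈ compImages H B₂ := by
  obtain ⟨a, haD⟩ := nonempty_of_mem_compImages h1
  have hDB₁ : D ⊆ B₁ := subset_of_mem_compImages h1
  have hcl₁ := closed_of_mem_compImages h1
  refine ⟨(H.induce B₂).connectedComponentMk ⟨a, hsub haD⟩, ?_⟩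
  ext z
  constructor
  · rintro ⟨⟨z, hzB₂⟩, hz, rfl⟩
    rw [SimpleGraph.ConnectedComponent.mem_supp_iff] at hz
    obtain ⟨w⟩ := SimpleGraph.ConnectedComponent.eq.mp hz
    obtain ⟨hzD', -⟩ := walk_stay hsub hcl w.reverse haD
    exact hzD'
  · intro hzD
    have hD1 := eq_image_of_mem h1 haD (hDB₁ haD)
    rw [hD1] at hzD
    obtain ⟨⟨z, hzB₁⟩, hz, rfl⟩ := hzD
    rw [SimpleGraph.ConnectedComponent.mem_supp_iff] at hz
    obtain ⟨w⟩ := SimpleGraph.ConnectedComponent.eq.mp hz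
    obtain ⟨hzD', hreach⟩ := walk_stay hDB₁ hcl₁ w.reverse haD
    refine ⟨⟨z, hsub hzD'⟩, ?_, rfl⟩
    rw [SimpleGraph.ConnectedComponent.mem_supp_iff]
    exact (SimpleGraph.ConnectedComponent.sound
      (reachable_mono hsub haD hzD' hreach)).symm

lemma mem_oddImages {B D : Set W} :
    D ∈ oddImages H B ↔ D ∈ compImages H B ∧ Odd D.ncard := Iff.rfl

lemma oddImages_transfer {B₁ B₂ D : Set W} (h1 : D ∈ oddImages H B₁)
    (hsub : D ⊆ B₂) (hcl : ∀ x ∈ D, ∀ y ∈ B₂, H.Adj x y → y ∈ D) :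
    D ∈ oddImages H B₂ :=
  ⟨compImages_transfer h1.1 hsub hcl, h1.2⟩

lemma qs_eq_ncard_odd_components (B : Set W) :
    qs H B = {C : (H.induce B).ConnectedComponent | Odd C.supp.ncard}.ncard := by
  have himg : oddImages H B =
      (fun C : (H.induce B).ConnectedComponent => Subtype.val '' C.supp) ''
        {C | Odd C.supp.ncard} := by
    ext D
    constructor
    · rintro ⟨⟨C, rfl⟩, hodd⟩
      exact ⟨C, by rwa [Set.ncard_image_of_injective _ Subtype.val_injective] at hodd, rfl⟩
    · rintro ⟨C, hC, rfl⟩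
      exact ⟨⟨C, rfl⟩, by rwa [Set.ncard_image_of_injective _ Subtype.val_injective]⟩
  rw [qs, himg]
  apply Set.ncard_image_of_injOn
  intro C₁ _ C₂ _ he
  exact SimpleGraph.ConnectedComponent.supp_injective
    ((Set.image_injective.mpr Subtype.val_injective) he)

lemma qs_mod_two [Finite W] (B : Set W) : qs H B % 2 = B.ncard % 2 := by
  classical
  letI : Fintype W := Fintype.ofFinite W
  letI : Fintype ↥B := Fintype.ofFinite ↥B
  haveI : Finite (H.induce B).ConnectedComponent :=
    Finite.of_surjective _ Quot.mk_surjective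
  letI : Fintype (H.induce B).ConnectedComponent := Fintype.ofFinite _
  rw [qs_eq_ncard_odd_components, ncard_setOf_fintype]
  have hfib : ∀ C : (H.induce B).ConnectedComponent,
      C.supp.ncard =
        (Finset.univ.filter
          (fun v : ↥B => (H.induce B).connectedComponentMk v = C)).card := by
    intro C
    rw [show C.supp = {v | (H.induce B).connectedComponentMk v = C} from rfl,
      ncard_setOf_fintype]
  have hsum : ∑ C : (H.induce B).ConnectedComponent, C.supp.ncard =
      Fintype.card ↥B := by
    rw [Finset.card_univ.symm,
      Finset.card_eq_sum_card_fiberwise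
        (f := fun v : ↥B => (H.induce B).connectedComponentMk v)
        (t := Finset.univ) (fun x _ => Finset.mem_univ _)]
    exact Finset.sum_congr rfl fun C _ => hfib C
  have hmod := card_filter_odd_mod_two (Finset.univ)
    (fun C : (H.induce B).ConnectedComponent => C.supp.ncard)
  rw [hsum] at hmod
  rw [← Nat.card_coe_set_eq, Nat.card_eq_fintype_card, ← hmod]
  congr 1
  apply Finset.card_bij (fun a _ => a) <;>
    simp +contextual [Finset.mem_filter]

/-- If two collections of odd component-images inject into `oddImages H B`,
disjointly, then `qs H B` is at least the sum of their sizes. -/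
lemma qs_ge_of_two_families [Finite W] {B : Set W} {F₁ F₂ : Set (Set W)}
    (h1 : F₁ ⊆ oddImages H B) (h2 : F₂ ⊆ oddImages H B)
    (hd : Disjoint F₁ F₂) : F₁.ncard + F₂.ncard ≤ qs H B := by
  rw [← Set.ncard_union_eq hd (Set.toFinite _) (Set.toFinite _)]
  exact Set.ncard_le_ncard (Set.union_subset h1 h2) (Set.toFinite _)





theorem tutteOn [Fintype W] (H : SimpleGraph W) (n : ℕ) :
    ∀ A : Set W, A.ncard ≤ n →
    (∀ S : Set W, S ⊆ A → qs H (A \ S) ≤ S.ncard) →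
    ∃ M : SimpleGraph.Subgraph H, M.IsMatching ∧ M.verts = A := by
  induction n using Nat.strong_induction_on with
  | _ n IH =>
  intro A hAn hTutte
  classical
  -- `P` is the collection of sets achieving equality in Tutte's condition.
  set P : Set (Set W) := {S | S ⊆ A ∧ qs H (A \ S) = S.ncard} with hPdef
  have hP0 : (∅ : Set W) ∈ P := by
    refine ⟨Set.empty_subset A, ?_⟩
    have := hTutte ∅ (Set.empty_subset A)
    simp only [Set.ncard_empty, Nat.le_zero] at this
    simpa using this
  obtain ⟨S, hSP, hSmax'⟩ := Set.Finite.exists_maximalFor (fun S : Set W => S.ncard)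
    P (Set.toFinite _) ⟨∅, hP0⟩
  obtain ⟨hSA, hSq⟩ := hSP
  have hmax : ∀ S' ∈ P, ¬ (S ⊂ S') := by
    intro S' hS' hss
    have h1 := hSmax' hS' (Set.ncard_le_ncard hss.subset (Set.toFinite _))
    exact absurd h1 (not_le.mpr (Set.ncard_lt_ncard hss (Set.toFinite _)))
  -- Claim 1: every component of `H` induced on `A \ S` is odd.
  have hodd : ∀ D ∈ compImages H (A \ S), Odd D.ncard := by
    intro D hD
    by_contra heven
    obtain ⟨v, hvD⟩ := nonempty_of_mem_compImages hD
    have hDsub := subset_of_mem_compImages hD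
    have hDcl := closed_of_mem_compImages hD
    have hvA : v ∈ A := (hDsub hvD).1
    have hvS : v ∉ S := (hDsub hvD).2
    have hS'A : insert v S ⊆ A := Set.insert_subset hvA hSA
    have hsub' : A \ insert v S ⊆ A \ S :=
      Set.diff_subset_diff_right (Set.subset_insert v S)
    have hfam1 : oddImages H (A \ S) ⊆ oddImages H (A \ insert v S) := by
      intro E hE
      have hED : Disjoint E D := disjoint_of_ne_compImages hE.1 hD
        (fun h => heven (h ▸ hE.2))
      refine oddImages_transfer hE ?_ ?_
      · intro x hx
        have hx' := subset_of_mem_compImages hE.1 hx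
        refine ⟨hx'.1, ?_⟩
        rw [Set.mem_insert_iff]
        push_neg
        exact ⟨fun h => Set.disjoint_left.mp hED hx (h ▸ hvD), hx'.2⟩
      · intro x hx y hy hadj
        exact closed_of_mem_compImages hE.1 x hx y (hsub' hy) hadj
    have hfam2 : oddImages H (D \ {v}) ⊆ oddImages H (A \ insert v S) := by
      intro E hE
      have hEsub := subset_of_mem_compImages hE.1
      refine oddImages_transfer hE ?_ ?_
      · intro x hx
        obtain ⟨hxD, hxv⟩ := hEsub hx
        refine ⟨(hDsub hxD).1, ?_⟩
        rw [Set.mem_insert_iff]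
        push_neg
        exact ⟨hxv, (hDsub hxD).2⟩
      · intro x hx y hy hadj
        have hyD : y ∈ D := hDcl x (hEsub hx).1 y (hsub' hy) hadj
        have hyv : y ≠ v := fun h => hy.2 (h ▸ Set.mem_insert v S)
        exact closed_of_mem_compImages hE.1 x hx y ⟨hyD, hyv⟩ hadj
    have hq2 : Odd (qs H (D \ {v})) := by
      have hmod := qs_mod_two (H := H) (D \ {v})
      have hcard : (D \ {v}).ncard = D.ncard - 1 :=
        Set.ncard_diff_singleton_of_mem hvD
      have hD1 : 1 ≤ D.ncard := (Set.ncard_pos (Set.toFinite _)).mpr ⟨v, hvD⟩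
      have hDev : D.ncard % 2 = 0 := Nat.even_iff.mp (Nat.not_odd_iff_even.mp heven)
      rw [Nat.odd_iff, hmod, hcard]
      omega
    have hq2ne : (oddImages H (D \ {v})).Nonempty := by
      rw [Set.nonempty_iff_ne_empty]
      intro h
      rw [qs, h, Set.ncard_empty] at hq2
      exact (Nat.not_odd_iff_even.mpr Even.zero) hq2
    have hdisj : Disjoint (oddImages H (A \ S)) (oddImages H (D \ {v})) := by
      rw [Set.disjoint_left]
      intro E hE1 hE2
      obtain ⟨x, hx⟩ := nonempty_of_mem_compImages hE2.1
      have hED : Disjoint E D := disjoint_of_ne_compImages hE1.1 hD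
        (fun h => heven (h ▸ hE1.2))
      exact Set.disjoint_left.mp hED hx ((subset_of_mem_compImages hE2.1 hx).1)
    have hsum := qs_ge_of_two_families hfam1 hfam2 hdisj
    have hF2 : 1 ≤ (oddImages H (D \ {v})).ncard :=
      (Set.ncard_pos (Set.toFinite _)).mpr hq2ne
    have hub := hTutte (insert v S) hS'A
    have hcards : (insert v S).ncard = S.ncard + 1 :=
      Set.ncard_insert_of_notMem hvS (Set.toFinite _)
    have heq : qs H (A \ insert v S) = (insert v S).ncard := by
      have h1 : (oddImages H (A \ S)).ncard = S.ncard := hSq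
      omega
    exact hmax (insert v S) ⟨hS'A, heq⟩ (Set.ssubset_insert hvS)
  -- Notation for components
  set ι := (H.induce (A \ S)).ConnectedComponent with hι
  haveI : Finite ι := Finite.of_surjective _ Quot.mk_surjective
  letI : Fintype ι := Fintype.ofFinite _
  set img : ι → Set W := fun C => Subtype.val '' C.supp with himg
  have himg_inj : Function.Injective img := fun C₁ C₂ he =>
    SimpleGraph.ConnectedComponent.supp_injective
      ((Set.image_injective.mpr Subtype.val_injective) he)
  have himg_mem : ∀ C : ι, img C ∈ compImages H (A \ S) := fun C => ⟨C, rfl⟩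
  have himg_odd : ∀ C : ι, img C ∈ oddImages H (A \ S) := fun C =>
    ⟨himg_mem C, hodd _ (himg_mem C)⟩
  -- number of components equals |S|
  have hcount : Fintype.card ι = S.ncard := by
    rw [← hSq, qs]
    have : oddImages H (A \ S) = Set.range img := by
      ext D
      constructor
      · rintro ⟨⟨C, rfl⟩, -⟩; exact ⟨C, rfl⟩
      · rintro ⟨C, rfl⟩; exact himg_odd C
    rw [this, ← Set.image_univ, Set.ncard_image_of_injective _ himg_inj,
      Set.ncard_univ, Nat.card_eq_fintype_card]
  -- Hall's condition applied to components vs S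
  set t : ι → Finset W := fun C =>
    (S.toFinite.toFinset).filter (fun s => ∃ x ∈ img C, H.Adj x s) with ht
  have hHall : ∀ k : Finset ι, k.card ≤ (k.biUnion t).card := by
    intro k
    set S'' : Set W := ↑(k.biUnion t) with hS''
    have hS''S : S'' ⊆ S := by
      intro x hx
      simp only [hS'', Finset.coe_biUnion, Set.mem_iUnion] at hx
      obtain ⟨C, -, hC⟩ := hx
      exact (S.toFinite.mem_toFinset).mp (Finset.mem_filter.mp hC).1
    have hsub'' : A \ S ⊆ A \ S'' := Set.diff_subset_diff_right hS''S
    have htrans : ∀ C ∈ k, img C ∈ oddImages H (A \ S'') := by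
      intro C hC
      refine oddImages_transfer (himg_odd C) ?_ ?_
      · exact fun x hx => hsub'' (subset_of_mem_compImages (himg_mem C) hx)
      · intro x hx y hy hadj
        by_cases hyS : y ∈ S
        · exfalso
          apply hy.2
          rw [hS'']
          simp only [Finset.coe_biUnion, Set.mem_iUnion]
          refine ⟨C, hC, ?_⟩
          rw [ht]
          exact Finset.mem_coe.mpr (Finset.mem_filter.mpr
            ⟨(S.toFinite.mem_toFinset).mpr hyS, ⟨x, hx, hadj⟩⟩)
        · exact closed_of_mem_compImages (himg_mem C) x hx y ⟨hy.1, hyS⟩ hadj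
    -- injection from k into oddImages of A \ S''
    have : (↑k : Set ι).ncard ≤ qs H (A \ S'') := by
      rw [qs]
      have : img '' ↑k ⊆ oddImages H (A \ S'') := by
        rintro D ⟨C, hC, rfl⟩
        exact htrans C hC
      calc (↑k : Set ι).ncard = (img '' ↑k).ncard :=
            (Set.ncard_image_of_injective _ himg_inj).symm
        _ ≤ _ := Set.ncard_le_ncard this (Set.toFinite _)
    have hq'' := hTutte S'' (hS''S.trans hSA)
    rw [Set.ncard_coe_finset] at this
    have : k.card ≤ S''.ncard := le_trans this hq''
    rwa [hS'', Set.ncard_coe_finset] at this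
  obtain ⟨f, hfinj, hf⟩ := (Finset.all_card_le_biUnion_card_iff_exists_injective t).mp hHall
  have hfS : ∀ C, f C ∈ S := fun C =>
    (S.toFinite.mem_toFinset).mp (Finset.mem_filter.mp (hf C)).1
  have hfadj : ∀ C, ∃ x ∈ img C, H.Adj x (f C) := fun C =>
    (Finset.mem_filter.mp (hf C)).2
  -- surjectivity of f onto S
  have hfsurj : ∀ s ∈ S, ∃ C, f C = s := by
    intro s hs
    have h1 : (Finset.univ.image f) ⊆ S.toFinite.toFinset := by
      intro x hx
      obtain ⟨C, -, rfl⟩ := Finset.mem_image.mp hx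
      exact (S.toFinite.mem_toFinset).mpr (hfS C)
    have h2 : (Finset.univ.image f).card = S.toFinite.toFinset.card := by
      rw [Finset.card_image_of_injective _ hfinj, Finset.card_univ, hcount,
        Set.ncard_eq_toFinset_card _ S.toFinite]
    have := Finset.eq_of_subset_of_card_le h1 (le_of_eq h2.symm)
    have hmem : s ∈ Finset.univ.image f := by
      rw [this]; exact (S.toFinite.mem_toFinset).mpr hs
    obtain ⟨C, -, hC⟩ := Finset.mem_image.mp hmem
    exact ⟨C, hC⟩
  -- choose matched vertices in components
  choose vc hvc hvcadj using hfadj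
  -- recursive matchings inside components
  have hrec : ∀ C : ι, ∃ M : SimpleGraph.Subgraph H,
      M.IsMatching ∧ M.verts = img C \ {vc C} := by
    intro C
    have hCsub : img C ⊆ A \ S := subset_of_mem_compImages (himg_mem C)
    have hCcl := closed_of_mem_compImages (himg_mem C)
    have hvcC : vc C ∈ img C := hvc C
    -- cardinality decrease
    have hlt : (img C \ {vc C}).ncard < n := by
      have h1 : (img C \ {vc C}).ncard < (img C).ncard :=
        Set.ncard_diff_singleton_lt_of_mem hvcC (Set.toFinite _)
      have h2 : (img C).ncard ≤ A.ncard :=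
        Set.ncard_le_ncard (hCsub.trans Set.diff_subset) (Set.toFinite _)
      omega
    -- Tutte condition for the component minus vc
    refine IH _ hlt (img C \ {vc C}) le_rfl ?_
    intro T hT
    by_contra hgt
    push_neg at hgt
    -- parity forces qs ≥ |T| + 2
    have hpar : qs H ((img C \ {vc C}) \ T) % 2 = T.ncard % 2 := by
      rw [qs_mod_two]
      have h1 : ((img C \ {vc C}) \ T).ncard = (img C).ncard - 1 - T.ncard := by
        rw [Set.ncard_diff hT (Set.toFinite _),
          Set.ncard_diff_singleton_of_mem hvcC]
      have hoddC : Odd (img C).ncard := hodd _ (himg_mem C)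
      have hTcard : T.ncard ≤ (img C \ {vc C}).ncard :=
        Set.ncard_le_ncard hT (Set.toFinite _)
      rw [Set.ncard_diff_singleton_of_mem hvcC] at hTcard
      rw [Nat.odd_iff] at hoddC
      have h2 : 1 ≤ (img C).ncard := by omega
      rw [h1]
      omega
    have hge2 : T.ncard + 2 ≤ qs H ((img C \ {vc C}) \ T) := by omega
    -- build big equality set S' = S ∪ {vc C} ∪ T
    set S' : Set W := insert (vc C) S ∪ T with hS'
    have hTsub : T ⊆ img C \ {vc C} := hT
    have hTA : T ⊆ A := fun x hx =>
      ((hCsub (hTsub hx).1).1 : _)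
    have hS'A : S' ⊆ A := by
      rw [hS']
      refine Set.union_subset (Set.insert_subset ((hCsub hvcC).1) hSA) hTA
    have hsubS' : A \ S' ⊆ A \ S := by
      refine Set.diff_subset_diff_right ?_
      rw [hS']
      exact (Set.subset_insert _ S).trans Set.subset_union_left
    -- family 1 : odd components different from C
    have hfam1 : (oddImages H (A \ S)) \ {img C} ⊆ oddImages H (A \ S') := by
      rintro E ⟨hE, hEC⟩
      have hED : Disjoint E (img C) :=
        disjoint_of_ne_compImages hE.1 (himg_mem C) hEC
      refine oddImages_transfer hE ?_ ?_
      · intro x hx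
        have hx' := subset_of_mem_compImages hE.1 hx
        refine ⟨hx'.1, ?_⟩
        rw [hS']
        rintro (hxm | hxT)
        · rcases Set.mem_insert_iff.mp hxm with h | h
          · exact Set.disjoint_left.mp hED hx (h ▸ hvcC)
          · exact hx'.2 h
        · exact Set.disjoint_left.mp hED hx (hTsub hxT).1
      · intro x hx y hy hadj
        exact closed_of_mem_compImages hE.1 x hx y (hsubS' hy) hadj
    -- family 2 : odd components of the component minus vc minus T
    have hfam2 : oddImages H ((img C \ {vc C}) \ T) ⊆ oddImages H (A \ S') := by
      intro E hE
      have hEsub := subset_of_mem_compImages hE.1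
      refine oddImages_transfer hE ?_ ?_
      · intro x hx
        obtain ⟨⟨hxC, hxv⟩, hxT⟩ := hEsub hx
        refine ⟨(hCsub hxC).1, ?_⟩
        rw [hS']
        rintro (hxm | hxT')
        · rcases Set.mem_insert_iff.mp hxm with h | h
          · exact hxv h
          · exact (hCsub hxC).2 h
        · exact hxT hxT'
      · intro x hx y hy hadj
        have hxC : x ∈ img C := ((hEsub hx).1).1
        have hyC : y ∈ img C := hCcl x hxC y (hsubS' hy) hadj
        have hy' : y ∈ (img C \ {vc C}) \ T := by
          refine ⟨⟨hyC, ?_⟩, ?_⟩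
          · intro h
            exact hy.2 (hS' ▸ Set.mem_union_left T (h ▸ Set.mem_insert _ S))
          · intro h
            exact hy.2 (hS' ▸ Set.mem_union_right _ h)
        exact closed_of_mem_compImages hE.1 x hx y hy' hadj
    have hdisj : Disjoint ((oddImages H (A \ S)) \ {img C})
        (oddImages H ((img C \ {vc C}) \ T)) := by
      rw [Set.disjoint_left]
      rintro E ⟨hE1, hEC⟩ hE2
      obtain ⟨x, hx⟩ := nonempty_of_mem_compImages hE2.1
      have hED : Disjoint E (img C) :=
        disjoint_of_ne_compImages hE1.1 (himg_mem C) hEC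
      exact Set.disjoint_left.mp hED hx (((subset_of_mem_compImages hE2.1 hx).1).1)
    have hsum := qs_ge_of_two_families hfam1 hfam2 hdisj
    have hcard1 : ((oddImages H (A \ S)) \ {img C}).ncard = S.ncard - 1 := by
      rw [Set.ncard_diff_singleton_of_mem (himg_odd C)]
      have h1 : (oddImages H (A \ S)).ncard = S.ncard := hSq
      omega
    -- cardinality of S'
    have hvcS : vc C ∉ S := (hCsub hvcC).2
    have hvcT : vc C ∉ T := fun h => (hTsub h).2 rfl
    have hTS : Disjoint T S := by
      rw [Set.disjoint_left]
      exact fun x hx => (hCsub (hTsub hx).1).2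
    have hS'card : S'.ncard = S.ncard + 1 + T.ncard := by
      rw [hS', Set.union_comm, Set.ncard_union_eq ?_ (Set.toFinite _) (Set.toFinite _),
        Set.ncard_insert_of_notMem hvcS (Set.toFinite _)]
      · ring
      · rw [Set.disjoint_left]
        intro x hx
        rw [Set.mem_insert_iff]
        push_neg
        exact ⟨fun h => hvcT (h ▸ hx), Set.disjoint_left.mp hTS hx⟩
    have hub := hTutte S' hS'A
    have h1le : 1 ≤ S.ncard := by
      rw [← hcount]
      exact Fintype.card_pos_iff.mpr ⟨C⟩
    have heq : qs H (A \ S') = S'.ncard := by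
      have := hsum
      rw [hcard1] at this
      have hbr : qs H ((img C \ {vc C}) \ T) =
        (oddImages H ((img C \ {vc C}) \ T)).ncard := rfl
      omega
    refine hmax S' ⟨hS'A, heq⟩ ?_
    rw [hS']
    refine Set.ssubset_iff_of_subset ?_ |>.mpr ⟨vc C, ?_, hvcS⟩
    · exact (Set.subset_insert _ S).trans Set.subset_union_left
    · exact Set.mem_union_left T (Set.mem_insert _ S)
  choose MC hMC hMCverts using hrec
  -- assemble the matching
  set bigM : SimpleGraph.Subgraph H :=
    ⨆ C : ι, (MC C ⊔ H.subgraphOfAdj (hvcadj C)) with hbigM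
  have hPiece : ∀ C : ι, (MC C ⊔ H.subgraphOfAdj (hvcadj C)).IsMatching := by
    intro C
    refine (hMC C).sup (SimpleGraph.Subgraph.IsMatching.subgraphOfAdj _) ?_
    rw [(hMC C).support_eq_verts,
      (SimpleGraph.Subgraph.IsMatching.subgraphOfAdj (hvcadj C)).support_eq_verts,
      hMCverts, SimpleGraph.subgraphOfAdj_verts]
    rw [Set.disjoint_left]
    rintro x ⟨hx1, hx2⟩ hx3
    rcases Set.mem_insert_iff.mp hx3 with h | h
    · exact hx2 h
    · rw [Set.mem_singleton_iff] at h
      exact (subset_of_mem_compImages (himg_mem C) hx1).2 (h ▸ hfS C)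
  have hPieceVerts : ∀ C : ι,
      (MC C ⊔ H.subgraphOfAdj (hvcadj C)).verts = img C ∪ {f C} := by
    intro C
    rw [SimpleGraph.Subgraph.verts_sup, hMCverts, SimpleGraph.subgraphOfAdj_verts]
    ext x
    simp only [Set.mem_union, Set.mem_diff, Set.mem_singleton_iff, Set.mem_insert_iff]
    constructor
    · rintro (⟨h1, -⟩ | h | h)
      · exact Or.inl h1
      · exact Or.inl (h ▸ hvc C)
      · exact Or.inr h
    · rintro (h | h)
      · by_cases hx : x = vc C
        · exact Or.inr (Or.inl hx)
        · exact Or.inl ⟨h, hx⟩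
      · exact Or.inr (Or.inr h)
  have hPieceDisj : Pairwise fun C₁ C₂ : ι =>
      Disjoint (MC C₁ ⊔ H.subgraphOfAdj (hvcadj C₁)).support
        (MC C₂ ⊔ H.subgraphOfAdj (hvcadj C₂)).support := by
    intro C₁ C₂ hne
    rw [(hPiece C₁).support_eq_verts, (hPiece C₂).support_eq_verts,
      hPieceVerts, hPieceVerts]
    have hd : Disjoint (img C₁) (img C₂) :=
      disjoint_of_ne_compImages (himg_mem C₁) (himg_mem C₂)
        (fun h => hne (himg_inj h))
    rw [Set.disjoint_left]
    rintro x (hx | hx) (hy | hy)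
    · exact Set.disjoint_left.mp hd hx hy
    · rw [Set.mem_singleton_iff] at hy
      exact (subset_of_mem_compImages (himg_mem C₁) hx).2 (hy ▸ hfS C₂)
    · rw [Set.mem_singleton_iff] at hx
      exact (subset_of_mem_compImages (himg_mem C₂) hy).2 (hx ▸ hfS C₁)
    · rw [Set.mem_singleton_iff] at hx hy
      exact hne (hfinj (hx.symm.trans hy))
  refine ⟨bigM, SimpleGraph.Subgraph.IsMatching.iSup hPiece hPieceDisj, ?_⟩
  rw [hbigM, SimpleGraph.Subgraph.verts_iSup]
  ext x
  simp only [Set.mem_iUnion]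
  constructor
  · rintro ⟨C, hC⟩
    rw [hPieceVerts] at hC
    rcases hC with h | h
    · exact (subset_of_mem_compImages (himg_mem C) h).1
    · exact hSA (h ▸ hfS C)
  · intro hxA
    by_cases hxS : x ∈ S
    · obtain ⟨C, hC⟩ := hfsurj x hxS
      exact ⟨C, by rw [hPieceVerts]; exact Or.inr (hC ▸ rfl)⟩
    · have hx' : x ∈ A \ S := ⟨hxA, hxS⟩
      refine ⟨(H.induce (A \ S)).connectedComponentMk ⟨x, hx'⟩, ?_⟩
      rw [hPieceVerts]
      exact Or.inl (mem_compImages_self hx')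






/-- Edge-connectivity gives a lower bound on (ordered) edge cuts. -/
lemma cut_bound [Fintype W] {G : SimpleGraph W} {r : ℕ}
    (hec : EdgeConnected G (2 * r)) {D : Set W} (hne : D.Nonempty)
    (hnec : Dᶜ.Nonempty) :
    2 * r ≤ {p : W × W | G.Adj p.1 p.2 ∧ p.1 ∈ D ∧ p.2 ∉ D}.ncard := by
  classical
  by_contra hlt
  push_neg at hlt
  set F : Set (Sym2 W) :=
    (fun p : W × W => s(p.1, p.2)) '' {p : W × W | G.Adj p.1 p.2 ∧ p.1 ∈ D ∧ p.2 ∉ D}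
    with hF
  have hFsub : F ⊆ G.edgeSet := by
    rintro e ⟨p, hp, rfl⟩
    exact hp.1
  have hFcard : F.ncard < 2 * r :=
    lt_of_le_of_lt (Set.ncard_image_le (Set.toFinite _)) hlt
  have hconn := hec.2 F hFsub hFcard
  obtain ⟨x, hx⟩ := hne
  obtain ⟨y, hy⟩ := hnec
  obtain ⟨w⟩ := hconn.preconnected x y
  obtain ⟨d, -, hd1, hd2⟩ := w.exists_boundary_dart D hx hy
  have hadj := d.adj
  rw [SimpleGraph.deleteEdges_adj] at hadj
  exact hadj.2 ⟨(d.fst, d.snd), ⟨hadj.1, hd1, hd2⟩, rfl⟩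

/-- Total ordered edge count into a set `T` equals the sum of degrees. -/
lemma pairs_into_card [Fintype W] {G : SimpleGraph W} {r : ℕ}
    (hreg : IsRegularDeg G (2 * r)) (T : Set W) :
    {p : W × W | G.Adj p.1 p.2 ∧ p.2 ∈ T}.ncard = 2 * r * T.ncard := by
  classical
  rw [Set.ncard_eq_toFinset_card _ (Set.toFinite _)]
  rw [Finset.card_eq_sum_card_fiberwise
    (f := fun p : W × W => p.2) (t := T.toFinite.toFinset)
    (fun p hp => (T.toFinite.mem_toFinset).mpr ((Set.Finite.mem_toFinset _).mp hp).2)]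
  have hfib : ∀ y ∈ T.toFinite.toFinset,
      (((({p : W × W | G.Adj p.1 p.2 ∧ p.2 ∈ T}).toFinite.toFinset)).filter
        (fun p => p.2 = y)).card = 2 * r := by
    intro y hy
    rw [← hreg y, deg, Set.ncard_eq_toFinset_card _ (Set.toFinite _)]
    apply Finset.card_bij (fun p _ => p.1)
    · intro p hp
      rw [Finset.mem_filter, Set.Finite.mem_toFinset] at hp
      rw [Set.Finite.mem_toFinset]
      exact (hp.2 ▸ hp.1.1).symm
    · intro p hp q hq he
      rw [Finset.mem_filter] at hp hq
      exact Prod.ext he (hp.2.trans hq.2.symm)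
    · intro x hx
      rw [Set.Finite.mem_toFinset] at hx
      refine ⟨(x, y), ?_, rfl⟩
      rw [Finset.mem_filter, Set.Finite.mem_toFinset]
      exact ⟨⟨hx.symm, (T.toFinite.mem_toFinset).mp hy⟩, rfl⟩
  rw [Finset.sum_congr rfl hfib, Finset.sum_const, smul_eq_mul,
    ← Set.ncard_eq_toFinset_card _ T.toFinite, mul_comm]

/-- The Tutte-type condition for `G - u`, from regularity and edge-connectivity. -/
lemma tutte_condition_del [Fintype W] {G : SimpleGraph W} {r : ℕ} (hr : 0 < r)
    (hreg : IsRegularDeg G (2 * r)) (hec : EdgeConnected G (2 * r))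
    (hodd : Odd (Fintype.card W)) (u : W) :
    ∀ S : Set W, S ⊆ {v | v ≠ u} → qs G ({v | v ≠ u} \ S) ≤ S.ncard := by
  classical
  intro S hSA
  set T : Set W := insert u S with hT
  have hBT : {v | v ≠ u} \ S = Tᶜ := by
    ext v
    simp only [Set.mem_diff, Set.mem_setOf_eq, Set.mem_compl_iff, hT,
      Set.mem_insert_iff]
    tauto
  rw [hBT]
  -- each odd component sends at least 2r ordered edges, all landing in T
  set crossSet : Set W → Set (W × W) :=
    fun D => {p : W × W | G.Adj p.1 p.2 ∧ p.1 ∈ D ∧ p.2 ∉ D} with hcross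
  set OI : Finset (Set W) := (oddImages G Tᶜ).toFinite.toFinset with hOI
  have hucompl : u ∉ Tᶜ := fun h => h (Set.mem_insert u S)
  have hstep1 : ∀ D ∈ OI, 2 * r ≤ (crossSet D).ncard := by
    intro D hD
    rw [hOI, Set.Finite.mem_toFinset] at hD
    exact cut_bound hec (nonempty_of_mem_compImages hD.1)
      ⟨u, fun h => hucompl (subset_of_mem_compImages hD.1 h)⟩
  -- cross sets land into T
  have hland : ∀ D ∈ OI, ∀ p ∈ crossSet D, G.Adj p.1 p.2 ∧ p.2 ∈ T := by
    intro D hD p hp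
    rw [hOI, Set.Finite.mem_toFinset] at hD
    refine ⟨hp.1, ?_⟩
    by_contra hpT
    exact hp.2.2 (closed_of_mem_compImages hD.1 p.1 hp.2.1 p.2 hpT hp.1)
  -- disjointness of cross sets
  have hdisj : ∀ D₁ ∈ OI, ∀ D₂ ∈ OI, D₁ ≠ D₂ →
      Disjoint (crossSet D₁) (crossSet D₂) := by
    intro D₁ hD₁ D₂ hD₂ hne
    rw [hOI, Set.Finite.mem_toFinset] at hD₁ hD₂
    have := disjoint_of_ne_compImages hD₁.1 hD₂.1 hne
    rw [Set.disjoint_left] at this ⊢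
    intro p hp1 hp2
    exact this hp1.2.1 hp2.2.1
  -- summation
  set crossFin : Set W → Finset (W × W) := fun D => (crossSet D).toFinite.toFinset
    with hcrossFin
  have hsum : ∑ D ∈ OI, (crossFin D).card = (OI.biUnion crossFin).card := by
    refine (Finset.card_biUnion ?_).symm
    intro D₁ h₁ D₂ h₂ hne
    have := hdisj D₁ h₁ D₂ h₂ hne
    rw [Set.disjoint_left] at this
    show Disjoint (crossFin D₁) (crossFin D₂)
    rw [Finset.disjoint_left]
    intro p hp1 hp2
    rw [hcrossFin, Set.Finite.mem_toFinset] at hp1 hp2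
    exact this hp1 hp2
  have hsub : OI.biUnion crossFin ⊆
      ({p : W × W | G.Adj p.1 p.2 ∧ p.2 ∈ T}).toFinite.toFinset := by
    intro p hp
    obtain ⟨D, hD, hpD⟩ := Finset.mem_biUnion.mp hp
    rw [hcrossFin, Set.Finite.mem_toFinset] at hpD
    rw [Set.Finite.mem_toFinset]
    exact hland D hD p hpD
  have hPT : (({p : W × W | G.Adj p.1 p.2 ∧ p.2 ∈ T}).toFinite.toFinset).card
      = 2 * r * T.ncard := by
    rw [← Set.ncard_eq_toFinset_card _ (Set.toFinite _)]
    exact pairs_into_card hreg T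
  have hlow : 2 * r * OI.card ≤ ∑ D ∈ OI, (crossFin D).card := by
    calc 2 * r * OI.card = ∑ _D ∈ OI, 2 * r := by
          rw [Finset.sum_const, smul_eq_mul, mul_comm]
      _ ≤ _ := Finset.sum_le_sum (fun D hD => by
          rw [hcrossFin, ← Set.ncard_eq_toFinset_card _ (Set.toFinite _)]
          exact hstep1 D hD)
  have hmain : 2 * r * OI.card ≤ 2 * r * T.ncard := by
    rw [← hPT]
    exact le_trans hlow (le_trans (le_of_eq hsum) (Finset.card_le_card hsub))
  have hq : OI.card = qs G Tᶜ := (Set.ncard_eq_toFinset_card _ _).symm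
  have hqle : qs G Tᶜ ≤ T.ncard := by
    rw [← hq]
    exact Nat.le_of_mul_le_mul_left hmain (by omega)
  -- parity
  have huS : u ∉ S := fun h => (hSA h) rfl
  have hTcard : T.ncard = S.ncard + 1 := by
    rw [hT, Set.ncard_insert_of_notMem huS (Set.toFinite _)]
  have hpar : qs G Tᶜ % 2 = Tᶜ.ncard % 2 := qs_mod_two _
  have hcompl : Tᶜ.ncard + T.ncard = Fintype.card W := by
    have h := Set.ncard_add_ncard_compl T
    rw [Nat.card_eq_fintype_card] at h
    omega
  have hoddW : Fintype.card W % 2 = 1 := Nat.odd_iff.mp hodd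
  omega


end TutteAux

/-- If `G` is `2r`-regular, `2r`-edge-connected of odd order, then `G - u`
has a 1-factor for every vertex `u`. -/
theorem vertex_deleted_one_factor {V : Type u} [Fintype V] (r : ℕ) (hr : 0 < r)
    (G : SimpleGraph V) (hreg : IsRegularDeg G (2 * r)) (hec : EdgeConnected G (2 * r))
    (hodd : Odd (Fintype.card V)) :
    ∀ u : V, HasFactorDel G u 1 := by 
  intro u
  classical
  have hcond := TutteAux.tutte_condition_del hr hreg hec hodd u
  obtain ⟨M, hM, hMverts⟩ :=
    TutteAux.tutteOn G ({v : V | v ≠ u}).ncard {v : V | v ≠ u} le_rfl hcond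
  refine ⟨{ Adj := fun a b => M.Adj a.1 b.1
            symm := ⟨fun a b h => h.symm⟩
            loopless := ⟨fun a h => G.loopless.irrefl a.1 (M.adj_sub h)⟩ },
    fun {a b} h => M.adj_sub h, ?_⟩
  intro x
  have hx : x.1 ∈ M.verts := by rw [hMverts]; exact x.2
  obtain ⟨w, hw, huniq⟩ := hM hx
  have hwv : w ∈ M.verts := M.edge_vert hw.symm
  have hwA : w ∈ {v : V | v ≠ u} := by rw [← hMverts]; exact hwv
  rw [deg]
  have hset : {y : ↥{v : V | v ≠ u} | M.Adj x.1 y.1} = {(⟨w, hwA⟩ : ↥{v : V | v ≠ u})} := by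
    ext y
    simp only [Set.mem_setOf_eq, Set.mem_singleton_iff]
    constructor
    · intro h
      exact Subtype.ext (huniq _ h)
    · rintro rfl
      exact hw
  rw [hset, Set.ncard_singleton]
end
end

section
/- Let G be a 2r-regular graph of odd order, let u be a vertex of G, let H = G - u, and let k be an integer with 2 \leq k < r. If D and S are disjoint subsets of V(H) with D \cup S = V(H) (so that H - (D \cup S) has no components) and q_H(D,S;k) + \sum_{x \in S}(k - d_{H-D}(x)) \geq k|D| + 2, then a contradiction follows; i.e., no such pair (D,S) with D \cup S = V(H) can satisfy this inequality. -/
noncomputable section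

open Finset

universe u

variable {V : Type u}

private lemma ncard_setOf_eq_sum' {α : Type*} [Fintype α] (P : α → Prop) [DecidablePred P] :
    {x | P x}.ncard = ∑ x : α, if P x then 1 else 0 := by
  rw [Set.ncard_eq_toFinset_card']
  simp only [Set.toFinset_setOf, Finset.card_filter]

/-- Case 1 of Claim 1: with `H = G - u` and `D ∪ S = V(H)` (so `H - (D ∪ S)`
has no components), the Tutte-deficiency inequality cannot hold. -/
theorem claim1_case1 {V : Type u} [Fintype V] (r k : ℕ) (hk2 : 2 ≤ k) (hkr : k < r)
    (G : SimpleGraph V) (hreg : IsRegularDeg G (2 * r)) (hodd : Odd (Fintype.card V))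
    (u : V) (D S : Set ↥{v : V | v ≠ u}) (hDS : Disjoint D S)
    (hcover : D ∪ S = Set.univ) :
    ¬ ((k : ℤ) * D.ncard + 2 ≤ (qCount (G.induce {v : V | v ≠ u}) D S k : ℤ)
        + ∑ x ∈ S.toFinite.toFinset,
            ((k : ℤ) - degDel (G.induce {v : V | v ≠ u}) D x)) := by
  classical
  intro hyp
  haveI : Fintype ↥{v : V | v ≠ u} := Fintype.ofFinite _
  set H := G.induce {v : V | v ≠ u} with hH
  -- q = 0
  have hq : qCount H D S k = 0 := by
    haveI hE : IsEmpty ↥((D ∪ S)ᶜ : Set ↥{v : V | v ≠ u}) := by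
      constructor
      rintro ⟨x, hx⟩
      exact hx (by rw [hcover]; trivial)
    haveI : IsEmpty (H.induce ((D ∪ S)ᶜ : Set ↥{v : V | v ≠ u})).ConnectedComponent := by
      constructor
      intro C
      exact C.ind (fun v => isEmptyElim v)
    rw [qCount]
    rw [Set.eq_empty_of_isEmpty
      {C : (H.induce ((D ∪ S)ᶜ : Set ↥{v : V | v ≠ u})).ConnectedComponent |
        Odd (eBetween H (Subtype.val '' C.supp) S + k * (Subtype.val '' C.supp).ncard)}]
    exact Set.ncard_empty _
  -- adjacency in H
  have hadj : ∀ x y : ↥{v : V | v ≠ u}, H.Adj x y ↔ G.Adj ↑x ↑y := by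
    intro x y; rw [hH, SimpleGraph.comap_adj]; rfl
  -- membership facts
  have hmem : ∀ y : ↥{v : V | v ≠ u}, y ∉ D ↔ y ∈ S := by
    intro y
    constructor
    · intro hy
      have : y ∈ D ∪ S := by rw [hcover]; trivial
      exact this.resolve_left hy
    · intro hy hyD
      exact (hDS.ne_of_mem hyD hy) rfl
  -- degree facts
  have hdeg_eq : ∀ x : ↥{v : V | v ≠ u}, deg H x = {w : V | G.Adj ↑x w ∧ w ≠ u}.ncard := by
    intro x
    have himg : Subtype.val '' {y : ↥{v : V | v ≠ u} | H.Adj x y}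
        = {w : V | G.Adj ↑x w ∧ w ≠ u} := by
      ext w
      constructor
      · rintro ⟨y, hy, rfl⟩
        exact ⟨(hadj x y).mp hy, y.2⟩
      · rintro ⟨hw, hwu⟩
        exact ⟨⟨w, hwu⟩, (hadj x ⟨w, hwu⟩).mpr hw, rfl⟩
    rw [deg, ← himg, Set.ncard_image_of_injective _ Subtype.val_injective]
  have hdegG : ∀ v : V, {w : V | G.Adj v w}.ncard = 2 * r := fun v => hreg v
  have hdeg_le : ∀ x : ↥{v : V | v ≠ u}, deg H x ≤ 2 * r := by
    intro x
    rw [hdeg_eq x, ← hdegG ↑x]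
    exact Set.ncard_le_ncard (fun w hw => hw.1) (Set.toFinite _)
  have hdeg_ge : ∀ x : ↥{v : V | v ≠ u},
      2 * r ≤ deg H x + (if G.Adj ↑x u then 1 else 0) := by
    intro x
    rw [hdeg_eq x]
    by_cases hxu : G.Adj ↑x u
    · rw [if_pos hxu]
      have hsub : {w : V | G.Adj ↑x w} ⊆ insert u {w : V | G.Adj ↑x w ∧ w ≠ u} := by
        intro w hw
        rcases eq_or_ne w u with h | h
        · rw [h]; exact Set.mem_insert _ _
        · exact Set.mem_insert_of_mem _ ⟨hw, h⟩
      have h1 : 2 * r ≤ (insert u {w : V | G.Adj ↑x w ∧ w ≠ u}).ncard := by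
        rw [← hdegG ↑x]
        exact Set.ncard_le_ncard hsub (Set.toFinite _)
      have h2 := Set.ncard_insert_le u {w : V | G.Adj ↑x w ∧ w ≠ u}
      omega
    · have heqs : {w : V | G.Adj ↑x w} = {w : V | G.Adj ↑x w ∧ w ≠ u} := by
        ext w
        exact ⟨fun hw => ⟨hw, fun hwu => hxu (hwu ▸ hw)⟩, fun hw => hw.1⟩
      rw [if_neg hxu, ← heqs, hdegG ↑x]
      omega
  -- a, b
  set a : ↥{v : V | v ≠ u} → ℕ := fun x => {y | H.Adj x y ∧ y ∈ S}.ncard with ha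
  set b : ↥{v : V | v ≠ u} → ℕ := fun x => {y | H.Adj x y ∧ y ∈ D}.ncard with hb
  have hasum : ∀ x, a x = ∑ y, if H.Adj x y ∧ y ∈ S then 1 else 0 := by
    intro x; rw [ha]; exact ncard_setOf_eq_sum' _
  have hbsum : ∀ x, b x = ∑ y, if H.Adj x y ∧ y ∈ D then 1 else 0 := by
    intro x; rw [hb]; exact ncard_setOf_eq_sum' _
  have hab : ∀ x, a x + b x = deg H x := by
    intro x
    rw [hasum, hbsum, ← Finset.sum_add_distrib, deg, ncard_setOf_eq_sum']
    refine Finset.sum_congr rfl fun y _ => ?_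
    by_cases hy : y ∈ S
    · have hyD : y ∉ D := fun h => (hDS.ne_of_mem h hy) rfl
      simp [hy, hyD]
    · have hyD : y ∈ D := by
        by_contra h
        exact hy ((hmem y).mp h)
      simp [hy, hyD]
  -- degDel = a
  have hdegDel : ∀ x, degDel H D x = a x := by
    intro x
    rw [degDel, ha]
    congr 1
    ext y
    simp only [Set.mem_setOf_eq, hmem y]
  -- finsets
  set Sf := S.toFinite.toFinset with hSfdef
  set Df := D.toFinite.toFinset with hDfdef
  have hSf : Sf = Finset.univ.filter (· ∈ S) := by
    ext x
    simp only [hSfdef, Set.Finite.mem_toFinset, Finset.mem_filter, Finset.mem_univ, true_and]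
  have hDf : Df = Finset.univ.filter (· ∈ D) := by
    ext x
    simp only [hDfdef, Set.Finite.mem_toFinset, Finset.mem_filter, Finset.mem_univ, true_and]
  have hSfcard : Sf.card = S.ncard := (Set.ncard_eq_toFinset_card S S.toFinite).symm
  have hDfcard : Df.card = D.ncard := (Set.ncard_eq_toFinset_card D D.toFinite).symm
  -- double counting
  have hdouble : ∑ x ∈ Sf, b x = ∑ y ∈ Df, a y := by
    have lhs : ∑ x ∈ Sf, b x
        = ∑ x, ∑ y, if x ∈ S ∧ H.Adj x y ∧ y ∈ D then 1 else 0 := by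
      rw [hSf, Finset.sum_filter]
      refine Finset.sum_congr rfl fun x _ => ?_
      by_cases hx : x ∈ S
      · rw [if_pos hx, hbsum]
        exact Finset.sum_congr rfl fun y _ => by simp [hx]
      · rw [if_neg hx]
        exact (Finset.sum_eq_zero fun y _ => by simp [hx]).symm
    have rhs : ∑ y ∈ Df, a y
        = ∑ y, ∑ x, if x ∈ S ∧ H.Adj x y ∧ y ∈ D then 1 else 0 := by
      rw [hDf, Finset.sum_filter]
      refine Finset.sum_congr rfl fun y _ => ?_
      by_cases hy : y ∈ D
      · rw [if_pos hy, hasum]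
        refine Finset.sum_congr rfl fun x _ => ?_
        have hiff : (H.Adj y x ∧ x ∈ S) ↔ (x ∈ S ∧ H.Adj x y ∧ y ∈ D) := by
          rw [H.adj_comm]; tauto
        simp only [hiff]
      · rw [if_neg hy]
        exact (Finset.sum_eq_zero fun x _ => by simp [hy]).symm
    rw [lhs, rhs, Finset.sum_comm]
  -- edges to u
  set eu : ↥{v : V | v ≠ u} → ℕ := fun x => if G.Adj ↑x u then 1 else 0 with heu
  have heusum : ∑ x ∈ Sf, eu x ≤ 2 * r := by
    have h1 : ∑ x ∈ Sf, eu x ≤ ∑ x, eu x :=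
      Finset.sum_le_sum_of_subset (Finset.subset_univ _)
    have h2 : ∑ x, eu x = {x : ↥{v : V | v ≠ u} | G.Adj ↑x u}.ncard :=
      (ncard_setOf_eq_sum' _).symm
    have himg : Subtype.val '' {x : ↥{v : V | v ≠ u} | G.Adj ↑x u} = {v : V | G.Adj v u} := by
      ext w
      constructor
      · rintro ⟨y, hy, rfl⟩; exact hy
      · intro hw
        exact ⟨⟨w, G.ne_of_adj hw⟩, hw, rfl⟩
    have h3 : {x : ↥{v : V | v ≠ u} | G.Adj ↑x u}.ncard = {v : V | G.Adj v u}.ncard := by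
      rw [← himg, Set.ncard_image_of_injective _ Subtype.val_injective]
    have h4 : {v : V | G.Adj v u} = {w : V | G.Adj u w} := by
      ext w; exact G.adj_comm w u
    calc ∑ x ∈ Sf, eu x ≤ ∑ x, eu x := h1
      _ = {v : V | G.Adj v u}.ncard := by rw [h2, h3]
      _ = 2 * r := by rw [h4]; exact hdegG u
  -- cardinalities
  have hcardX : D.ncard + S.ncard + 1 = Fintype.card V := by
    have h1 : (D ∪ S).ncard = D.ncard + S.ncard :=
      Set.ncard_union_eq hDS (Set.toFinite _) (Set.toFinite _)
    have h2 : (Set.univ : Set ↥{v : V | v ≠ u}).ncard = Fintype.card ↥{v : V | v ≠ u} := by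
      rw [Set.ncard_univ, Nat.card_eq_fintype_card]
    have h3 : Fintype.card ↥{v : V | v ≠ u} + 1 = Fintype.card V := by
      have hc : Fintype.card ↥{v : V | v ≠ u} = Fintype.card {x : V // ¬ x = u} :=
        Fintype.card_congr (Equiv.refl _)
      rw [hc, Fintype.card_subtype_compl, Fintype.card_subtype_eq]
      have : 1 ≤ Fintype.card V := Fintype.card_pos_iff.mpr ⟨u⟩
      omega
    rw [← h3, ← h2, ← hcover, h1]
  have heven : (D.ncard + S.ncard) % 2 = 0 := by
    rcases hodd with ⟨m, hm⟩
    omega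
  -- the hypothesis, rewritten
  have hyp2 : (k : ℤ) * D.ncard + 2 ≤ (k : ℤ) * S.ncard - ∑ x ∈ Sf, (a x : ℤ) := by
    have hsum : ∑ x ∈ Sf, ((k : ℤ) - degDel H D x)
        = (k : ℤ) * S.ncard - ∑ x ∈ Sf, (a x : ℤ) := by
      rw [Finset.sum_sub_distrib, Finset.sum_const, hSfcard, nsmul_eq_mul, mul_comm]
      congr 1
      exact Finset.sum_congr rfl fun x _ => by rw [hdegDel x]
    rw [hq, hsum] at hyp
    push_cast at hyp
    linarith
  -- lower bound on A + B + E
  have hA_lb : 2 * (r : ℤ) * S.ncard ≤ (∑ x ∈ Sf, (a x : ℤ)) + (∑ x ∈ Sf, (b x : ℤ))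
      + ∑ x ∈ Sf, (eu x : ℤ) := by
    have h1 : ∀ x ∈ Sf, (2 * r : ℤ) ≤ (a x : ℤ) + (b x : ℤ) + (eu x : ℤ) := by
      intro x _
      have hn : 2 * r ≤ a x + b x + eu x := by
        rw [hab x]
        simp only [heu]
        exact hdeg_ge x
      exact_mod_cast hn
    calc 2 * (r : ℤ) * S.ncard = ∑ _x ∈ Sf, (2 * r : ℤ) := by
          rw [Finset.sum_const, hSfcard, nsmul_eq_mul]; ring
      _ ≤ ∑ x ∈ Sf, ((a x : ℤ) + (b x : ℤ) + (eu x : ℤ)) := Finset.sum_le_sum h1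
      _ = _ := by rw [Finset.sum_add_distrib, Finset.sum_add_distrib]
  -- upper bound on B
  have hB_ub : (∑ x ∈ Sf, (b x : ℤ)) ≤ 2 * (r : ℤ) * D.ncard := by
    have hn : ∑ x ∈ Sf, b x ≤ 2 * r * D.ncard := by
      rw [hdouble]
      calc ∑ y ∈ Df, a y ≤ ∑ _y ∈ Df, 2 * r := by
            refine Finset.sum_le_sum fun y _ => ?_
            have h5 := hab y
            have h6 := hdeg_le y
            omega
        _ = 2 * r * D.ncard := by rw [Finset.sum_const, hDfcard, smul_eq_mul, mul_comm]
    exact_mod_cast hn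
  have hE_ub : (∑ x ∈ Sf, (eu x : ℤ)) ≤ 2 * (r : ℤ) := by exact_mod_cast heusum
  have hA_nonneg : (0 : ℤ) ≤ ∑ x ∈ Sf, (a x : ℤ) :=
    Finset.sum_nonneg fun x _ => Int.natCast_nonneg _
  -- d + 2 ≤ s
  have hds : (D.ncard : ℤ) + 2 ≤ S.ncard := by
    have h1 : (k : ℤ) * D.ncard + 2 ≤ (k : ℤ) * S.ncard := by linarith
    have hkpos : (0 : ℤ) < k := by exact_mod_cast Nat.lt_of_lt_of_le Nat.zero_lt_two hk2
    have h2 : (D.ncard : ℤ) < S.ncard := by nlinarith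
    have h3 : D.ncard < S.ncard := by exact_mod_cast h2
    have h4 : D.ncard + 2 ≤ S.ncard := by omega
    exact_mod_cast h4
  -- final contradiction
  have hkr' : (k : ℤ) < r := by exact_mod_cast hkr
  have hk2' : (2 : ℤ) ≤ k := by exact_mod_cast hk2
  nlinarith [mul_nonneg (show (0:ℤ) ≤ 2 * r - k by linarith)
    (show (0:ℤ) ≤ (S.ncard : ℤ) - D.ncard - 2 by linarith)]
end
end

section
/- Let k, m, r be integers with 2 \leq k \leq m < r. Let G be a 2r-regular, 2m-edge-connected graph of odd order, u a vertex of G, and H = G - u. If D, S are disjoint subsets of V(H) such that H - (D \cup S) has exactly one component, then q_H(D,S;k) + \sum_{x \in S}(k - d_{H-D}(x)) < k|D| + 2. -/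
noncomputable section

open Finset

universe u

variable {V : Type u}

section AuxLemmas

open Classical in
/-- number of neighbors of `v` satisfying `P`. -/
def nbF {α : Type u} [Fintype α] (G : SimpleGraph α) (v : α) (P : α → Prop) : ℕ :=
  (Finset.univ.filter (fun y => G.Adj v y ∧ P y)).card

open Classical in
lemma ncard_setOf_eq {α : Type u} [Fintype α] (P : α → Prop) :
    {x | P x}.ncard = (Finset.univ.filter P).card := by
  rw [Set.ncard_eq_toFinset_card']
  congr 1
  ext x
  simp

open Classical in
lemma deg_eq_card {α : Type u} [Fintype α] (G : SimpleGraph α) (v : α) :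
    {w | G.Adj v w}.ncard = (Finset.univ.filter (G.Adj v)).card :=
  ncard_setOf_eq _

open Classical in
lemma nbF_split {α : Type u} [Fintype α] (G : SimpleGraph α) (v : α) (P : α → Prop) :
    nbF G v P + nbF G v (fun y => ¬ P y) = (Finset.univ.filter (G.Adj v)).card := by
  unfold nbF
  rw [Finset.card_filter, Finset.card_filter, Finset.card_filter, ← Finset.sum_add_distrib]
  refine Finset.sum_congr rfl fun y _ => ?_
  by_cases h1 : G.Adj v y <;> by_cases h2 : P y <;> simp [h1, h2]

open Classical in
lemma nbF_mono {α : Type u} [Fintype α] (G : SimpleGraph α) (v : α) {P Q : α → Prop}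
    (h : ∀ y, P y → Q y) : nbF G v P ≤ nbF G v Q := by
  apply Finset.card_le_card
  intro y hy
  simp only [Finset.mem_filter] at *
  exact ⟨hy.1, hy.2.1, h y hy.2.2⟩

open Classical in
lemma nbF_add_le {α : Type u} [Fintype α] (G : SimpleGraph α) (v : α) {P Q : α → Prop}
    (hdisj : ∀ y, P y → Q y → False) :
    nbF G v P + nbF G v Q ≤ (Finset.univ.filter (G.Adj v)).card := by
  unfold nbF
  rw [Finset.card_filter, Finset.card_filter, Finset.card_filter, ← Finset.sum_add_distrib]
  refine Finset.sum_le_sum fun y _ => ?_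
  by_cases h1 : G.Adj v y <;> by_cases h2 : P y <;> by_cases h3 : Q y <;>
    simp [h1, h2, h3] <;> exact (hdisj y h2 h3).elim

open Classical in
lemma key_sum {α : Type u} [Fintype α] (G : SimpleGraph α) (P Q : α → Prop) :
    ∑ a ∈ Finset.univ.filter P, nbF G a Q
      = ∑ a ∈ (Finset.univ : Finset α), ∑ b ∈ (Finset.univ : Finset α),
          (if P a ∧ G.Adj a b ∧ Q b then 1 else 0) := by
  rw [Finset.sum_filter]
  refine Finset.sum_congr rfl fun a _ => ?_
  by_cases h : P a
  · simp only [h, if_true, true_and]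
    unfold nbF
    rw [Finset.card_filter]
  · simp [h]

open Classical in
lemma sum_nbF_comm {α : Type u} [Fintype α] (G : SimpleGraph α) (P Q : α → Prop) :
    ∑ a ∈ Finset.univ.filter P, nbF G a Q
      = ∑ b ∈ Finset.univ.filter Q, nbF G b P := by
  rw [key_sum, key_sum, Finset.sum_comm]
  refine Finset.sum_congr rfl fun a _ => Finset.sum_congr rfl fun b _ => ?_
  have hadj : G.Adj b a ↔ G.Adj a b := G.adj_comm b a
  by_cases h1 : G.Adj a b <;> by_cases h2 : P b <;> by_cases h3 : Q a <;>
    simp [h1, h2, h3, hadj]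

open Classical in
lemma ncard_pairs_eq_sum {α : Type u} [Fintype α] (G : SimpleGraph α) (P Q : α → Prop) :
    {p : α × α | G.Adj p.1 p.2 ∧ P p.1 ∧ Q p.2}.ncard
      = ∑ a ∈ Finset.univ.filter P, nbF G a Q := by
  rw [ncard_setOf_eq, key_sum, Finset.card_filter, ← Finset.univ_product_univ,
    Finset.sum_product]
  refine Finset.sum_congr rfl fun a _ => Finset.sum_congr rfl fun b _ => ?_
  by_cases h1 : G.Adj a b <;> by_cases h2 : P a <;> by_cases h3 : Q b <;> simp [h1, h2, h3]

open Classical in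
lemma card_filter_irrel {α : Type u} [Fintype α] (P : α → Prop) (h1 h2 : DecidablePred P) :
    (@Finset.filter α P h1 Finset.univ).card = (@Finset.filter α P h2 Finset.univ).card := by
  rw [Finset.card_filter, Finset.card_filter]
  exact Finset.sum_congr rfl fun y _ => by by_cases h : P y <;> simp [h]

lemma walk_pred {α : Type u} {G : SimpleGraph α} {P : α → Prop}
    (h : ∀ a b, G.Adj a b → P a → P b) : ∀ {a b : α}, G.Walk a b → P a → P b := by
  intro a b p
  induction p with
  | nil => exact id
  | cons hadj _ ih => exact fun ha => ih (h _ _ hadj ha)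

end AuxLemmas

set_option maxHeartbeats 1000000 in
/-- Case 2 of Claim 1: with `H = G - u` and `H - (D ∪ S)` having exactly one
component, the Tutte-deficiency inequality cannot hold:
`q_H(D,S;k) + ∑_{x∈S}(k - d_{H-D}(x)) < k|D| + 2`. -/
theorem claim1_case2 {V : Type u} [Fintype V] (r k m : ℕ) (hk2 : 2 ≤ k) (hkm : k ≤ m)
    (hmr : m < r)
    (G : SimpleGraph V) (hreg : IsRegularDeg G (2 * r)) (hec : EdgeConnected G (2 * m))
    (hodd : Odd (Fintype.card V))
    (u : V) (D S : Set ↥{v : V | v ≠ u}) (hDS : Disjoint D S)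
    (hone : numComponents (G.induce {v : V | v ≠ u}) (D ∪ S) = 1) :
    (qCount (G.induce {v : V | v ≠ u}) D S k : ℤ)
        + ∑ x ∈ S.toFinite.toFinset,
            ((k : ℤ) - degDel (G.induce {v : V | v ≠ u}) D x)
      < (k : ℤ) * D.ncard + 2 := by
  classical
  by_contra hcon
  push_neg at hcon
  -- predicates on V
  set PD : V → Prop := fun v => ∃ h : v ≠ u, (⟨v, h⟩ : ↥{v : V | v ≠ u}) ∈ D with hPD
  set PS : V → Prop := fun v => ∃ h : v ≠ u, (⟨v, h⟩ : ↥{v : V | v ≠ u}) ∈ S with hPS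
  set Pnd : V → Prop := fun v => v ≠ u ∧ ¬ PD v with hPnd
  set PW : V → Prop := fun v => v ≠ u ∧ ¬ PD v ∧ ¬ PS v with hPW
  set PX : V → Prop := fun v => ¬ Pnd v with hPX
  have hdeg : ∀ v : V, (Finset.univ.filter (G.Adj v)).card = 2 * r := by
    intro v
    have h := hreg v
    unfold deg at h
    rwa [deg_eq_card] at h
  have hDSdisj : ∀ v : V, PD v → PS v → False := by
    rintro v ⟨h1, hm1⟩ ⟨h2, hm2⟩
    exact Set.disjoint_left.mp hDS hm1 hm2
  -- degDel identity
  have hdegDel : ∀ x : ↥{v : V | v ≠ u},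
      degDel (G.induce {v : V | v ≠ u}) D x = nbF G ↑x Pnd := by
    intro x
    have himg : Subtype.val ''
        {y : ↥{v : V | v ≠ u} | (G.induce {v : V | v ≠ u}).Adj x y ∧ y ∉ D}
        = {v : V | G.Adj ↑x v ∧ Pnd v} := by
      ext v
      simp only [Set.mem_image, Set.mem_setOf_eq, SimpleGraph.comap_adj,
        Function.Embedding.coe_subtype, hPnd]
      constructor
      · rintro ⟨y, ⟨hadj, hyD⟩, rfl⟩
        exact ⟨hadj, y.2, fun ⟨h, hm⟩ => hyD hm⟩
      · rintro ⟨hadj, h1, h2⟩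
        exact ⟨⟨v, h1⟩, ⟨hadj, fun hm => h2 ⟨h1, hm⟩⟩, rfl⟩
    show ({y : ↥{v : V | v ≠ u} |
        (G.induce {v : V | v ≠ u}).Adj x y ∧ y ∉ D}).ncard = _
    rw [← Set.ncard_image_of_injective _ Subtype.val_injective, himg, ncard_setOf_eq]
    unfold nbF
    exact card_filter_irrel _ _ _
  -- finsets
  set SFv : Finset V :=
    @Finset.filter V PS (fun a => Classical.propDecidable (PS a)) Finset.univ with hSFv
  set DF : Finset V :=
    @Finset.filter V PD (fun a => Classical.propDecidable (PD a)) Finset.univ with hDF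
  set XF : Finset V :=
    @Finset.filter V PX (fun a => Classical.propDecidable (PX a)) Finset.univ with hXF
  have hDcard : DF.card = D.ncard := by
    have himg : Subtype.val '' D = {v : V | PD v} := by
      ext v
      simp only [Set.mem_image, Set.mem_setOf_eq, hPD]
      constructor
      · rintro ⟨y, hy, rfl⟩; exact ⟨y.2, hy⟩
      · rintro ⟨h, hm⟩; exact ⟨⟨v, h⟩, hm, rfl⟩
    rw [← Set.ncard_image_of_injective D Subtype.val_injective, himg, ncard_setOf_eq, hDF]
  have hSFveq : SFv = (S.toFinite.toFinset).image Subtype.val := by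
    ext v
    simp only [hSFv, Finset.mem_image, Set.Finite.mem_toFinset, Finset.mem_filter,
      Finset.mem_univ, true_and, hPS]
    constructor
    · rintro ⟨h, hm⟩; exact ⟨⟨v, h⟩, hm, rfl⟩
    · rintro ⟨y, hy, rfl⟩; exact ⟨y.2, hy⟩
  have huDF : u ∉ DF := by
    simp only [hDF, Finset.mem_filter, Finset.mem_univ, true_and, hPD]
    rintro ⟨h, -⟩
    exact h rfl
  have hXFins : XF = insert u DF := by
    ext v
    simp only [hXF, hDF, Finset.mem_insert, Finset.mem_filter, Finset.mem_univ, true_and,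
      hPX, hPnd]
    tauto
  have hXFcard : XF.card = D.ncard + 1 := by
    rw [hXFins, Finset.card_insert_of_notMem huDF, hDcard]
  -- quantities
  set Sd : ℕ := ∑ v ∈ SFv, nbF G v Pnd with hSd
  set E1 : ℕ := ∑ v ∈ SFv, nbF G v PX with hE1
  set E2 : ℕ := ∑ v ∈ XF, nbF G v PW with hE2
  set E3 : ℕ := ∑ v ∈ SFv, nbF G v PW with hE3
  set sC : ℕ := SFv.card with hsC
  set dC : ℕ := D.ncard with hdC
  -- (3) E1 + Sd = 2r * sC
  have h3 : E1 + Sd = 2 * r * sC := by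
    rw [hE1, hSd, ← Finset.sum_add_distrib]
    have : ∀ v ∈ SFv, nbF G v PX + nbF G v Pnd = 2 * r := by
      intro v _
      rw [hPX]
      rw [Nat.add_comm]
      rw [nbF_split G v Pnd]
      exact hdeg v
    rw [Finset.sum_congr rfl this, Finset.sum_const, smul_eq_mul, hsC, Nat.mul_comm]
  -- (4) E1' + E2 ≤ 2r * (dC + 1), with double counting E1' = E1
  have hE1' : ∑ v ∈ XF, nbF G v PS = E1 := by
    rw [hE1, hSFv, hXF]
    exact (sum_nbF_comm G PS PX).symm
  have h4 : E1 + E2 ≤ 2 * r * (dC + 1) := by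
    rw [← hE1', hE2, ← Finset.sum_add_distrib]
    calc ∑ v ∈ XF, (nbF G v PS + nbF G v PW)
        ≤ ∑ _v ∈ XF, 2 * r := by
          refine Finset.sum_le_sum fun v _ => ?_
          rw [← hdeg v]
          refine nbF_add_le G v ?_
          intro y hyS hyW
          exact hyW.2.2 hyS
      _ = 2 * r * (dC + 1) := by
          rw [Finset.sum_const, smul_eq_mul, hXFcard, hdC, Nat.mul_comm]
  -- (C) E3 ≤ Sd
  have hC : E3 ≤ Sd := by
    rw [hE3, hSd]
    refine Finset.sum_le_sum fun v _ => nbF_mono G v ?_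
    intro y hy
    exact ⟨hy.1, hy.2.1⟩
  -- q ≤ 1
  have hq : qCount (G.induce {v : V | v ≠ u}) D S k ≤ 1 := by
    rw [← hone]
    unfold qCount numComponents
    rw [← Set.ncard_univ]
    exact Set.ncard_le_ncard (Set.subset_univ _) Set.finite_univ
  -- W nonempty
  have hWex : ∃ w : V, PW w := by
    have hpos : 0 < numComponents (G.induce {v : V | v ≠ u}) (D ∪ S) := by
      rw [hone]; exact Nat.one_pos
    unfold numComponents at hpos
    obtain ⟨C⟩ := (Nat.card_pos_iff.mp hpos).1
    obtain ⟨y, -⟩ := C.exists_rep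
    refine ⟨↑(↑y : ↥{v : V | v ≠ u}), (↑y : ↥{v : V | v ≠ u}).2, ?_, ?_⟩
    · rintro ⟨h, hm⟩
      exact y.2 (Or.inl hm)
    · rintro ⟨h, hm⟩
      exact y.2 (Or.inr hm)
  -- the cut
  set Fc : Set (Sym2 V) :=
    {e | e ∈ G.edgeSet ∧ ∃ p : V × V, e = s(p.1, p.2) ∧ ¬ PW p.1 ∧ PW p.2} with hFc
  have hFsub : Fc ⊆ G.edgeSet := fun e he => he.1
  have hstep : ∀ a b : V, (G.deleteEdges Fc).Adj a b → PW a → PW b := by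
    intro a b hab hPa
    by_contra hPb
    rw [SimpleGraph.deleteEdges_adj] at hab
    exact hab.2 ⟨G.mem_edgeSet.mpr hab.1, (b, a), Sym2.eq_swap, hPb, hPa⟩
  have hcut : 2 * m ≤ Fc.ncard := by
    by_contra hlt
    push_neg at hlt
    have hconn := hec.2 Fc hFsub hlt
    obtain ⟨w, hw⟩ := hWex
    obtain ⟨p⟩ := hconn.preconnected w u
    exact (walk_pred hstep p hw).1 rfl
  -- bounding the cut by E3 + E2
  set tset : Set (V × V) := {p : V × V | G.Adj p.1 p.2 ∧ (¬ PW p.1) ∧ PW p.2} with htset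
  have hFle : Fc.ncard ≤ tset.ncard := by
    set f : Sym2 V → V × V := fun e =>
      if h : ∃ p : V × V, e = s(p.1, p.2) ∧ ¬ PW p.1 ∧ PW p.2 then h.choose else (u, u)
      with hf
    refine Set.ncard_le_ncard_of_injOn f ?_ ?_ (Set.toFinite _)
    · intro e he
      have hex := he.2
      have hspec := hex.choose_spec
      show f e ∈ tset
      rw [hf]
      simp only [dif_pos hex]
      exact ⟨G.mem_edgeSet.mp (hspec.1 ▸ he.1), hspec.2.1, hspec.2.2⟩
    · intro e1 h1 e2 h2 heq
      have s1 := h1.2.choose_spec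
      have s2 := h2.2.choose_spec
      rw [hf] at heq
      simp only [dif_pos h1.2, dif_pos h2.2] at heq
      rw [s1.1, s2.1, heq]
  have hWcsplit : @Finset.filter V (fun a => ¬ PW a)
      (fun a => Classical.propDecidable _) Finset.univ = SFv ∪ XF := by
    ext v
    simp only [Finset.mem_union, hSFv, hXF, Finset.mem_filter, Finset.mem_univ, true_and,
      hPW, hPX, hPnd]
    tauto
  have hdisjSX : Disjoint SFv XF := by
    rw [Finset.disjoint_left]
    intro a ha hb
    simp only [hSFv, hXF, Finset.mem_filter, Finset.mem_univ, true_and, hPX, hPnd] at ha hb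
    rcases ha with ⟨h, hm⟩
    exact hb ⟨h, fun hd => hDSdisj a hd ⟨h, hm⟩⟩
  have hD : 2 * m ≤ E3 + E2 := by
    calc 2 * m ≤ Fc.ncard := hcut
      _ ≤ tset.ncard := hFle
      _ = ∑ a ∈ @Finset.filter V (fun a => ¬ PW a)
            (fun a => Classical.propDecidable _) Finset.univ, nbF G a PW := by
          rw [htset]
          exact ncard_pairs_eq_sum G (fun a => ¬ PW a) PW
      _ = E3 + E2 := by
          rw [hWcsplit, Finset.sum_union hdisjSX, hE3, hE2]
  -- rewrite the sum in hcon
  have hsum : ∑ x ∈ S.toFinite.toFinset,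
      ((k : ℤ) - degDel (G.induce {v : V | v ≠ u}) D x)
      = (k : ℤ) * sC - Sd := by
    have h1 : ∑ x ∈ S.toFinite.toFinset,
        ((k : ℤ) - degDel (G.induce {v : V | v ≠ u}) D x)
        = ∑ x ∈ S.toFinite.toFinset, ((k : ℤ) - nbF G ↑x Pnd) := by
      refine Finset.sum_congr rfl fun x _ => ?_
      rw [hdegDel x]
    have h2 : ∑ x ∈ S.toFinite.toFinset, ((k : ℤ) - nbF G ↑x Pnd)
        = ∑ v ∈ SFv, ((k : ℤ) - nbF G v Pnd) := by
      rw [hSFveq]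
      exact (Finset.sum_image (f := fun v => ((k : ℤ) - (nbF G v Pnd : ℤ)))
        (g := Subtype.val) (s := S.toFinite.toFinset)
        (fun x _ y _ h => Subtype.val_injective h)).symm
    rw [h1, h2, Finset.sum_sub_distrib, Finset.sum_const, nsmul_eq_mul, hsC, hSd]
    push_cast
    ring
  rw [hsum] at hcon
  -- final arithmetic
  have hq' : (qCount (G.induce {v : V | v ≠ u}) D S k : ℤ) ≤ 1 := by exact_mod_cast hq
  have h3' : (E1 : ℤ) + Sd = 2 * r * sC := by exact_mod_cast h3
  have h4' : (E1 : ℤ) + E2 ≤ 2 * r * (dC + 1) := by exact_mod_cast h4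
  have hC' : (E3 : ℤ) ≤ Sd := by exact_mod_cast hC
  have hD' : 2 * (m : ℤ) ≤ E3 + E2 := by exact_mod_cast hD
  have hkm' : (k : ℤ) ≤ m := by exact_mod_cast hkm
  have hmr' : (m : ℤ) < r := by exact_mod_cast hmr
  have hk2' : (2 : ℤ) ≤ k := by exact_mod_cast hk2
  have hSd0 : (0 : ℤ) ≤ Sd := by positivity
  have hcon' : (k : ℤ) * dC + 2 ≤ (qCount (G.induce {v : V | v ≠ u}) D S k : ℤ)
      + ((k : ℤ) * sC - Sd) := hcon
  have hds : (dC : ℤ) < sC := by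
    by_contra hle
    push_neg at hle
    have : (k : ℤ) * sC ≤ k * dC :=
      mul_le_mul_of_nonneg_left hle (by linarith)
    linarith
  have hprod : 2 * (r : ℤ) - 2 * k ≤ (2 * (r : ℤ) - 2 * k) * ((sC : ℤ) - dC) :=
    le_mul_of_one_le_right (by linarith) (by linarith)
  nlinarith [hq', h3', h4', hC', hD', hcon', hprod, hds]
end
end

section
/- Let r \geq 2 be an integer. Let \Gamma be K_{2r+1} minus a matching of size r-1, take 2r-1 disjoint copies of \Gamma, let M be a matching of size r-1 on a new vertex set S of size 2r-2, and let H be the 2r-regular graph obtained by joining the 2r-2 vertices of degree 2r-1 in each copy of \Gamma to the vertices of S (so every vertex of S gets degree 2r). Then for every vertex v of S, the graph H - v has no 1-factor. -/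
noncomputable section

open Finset

universe u

variable {V : Type u}

/-- Two numbers matched by the standard matching `{0,1}, {2,3}, ...`. -/
def pairedNat (a b : ℕ) : Prop := a / 2 = b / 2 ∧ a ≠ b

/-- Vertex set of the lower-bound construction: `2r - 1` copies of
`K_{2r+1}` minus a matching of size `r - 1`, together with a set `S` of
`2r - 2` extra vertices. -/
abbrev ConVert (r : ℕ) := (Fin (2 * r - 1) × Fin (2 * r + 1)) ⊕ Fin (2 * r - 2)

/-- The graph `H`: inside each copy, `K_{2r+1}` minus the matching
`{0,1},…,{2r-4,2r-3}`; each vertex `j < 2r - 2` of each copy is joined to the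
`j`-th vertex of `S`; and `S` carries the matching `{0,1},…,{2r-4,2r-3}`
(of size `r - 1`). -/
def ConGraph (r : ℕ) : SimpleGraph (ConVert r) :=
  SimpleGraph.fromRel (fun x y =>
    match x, y with
    | Sum.inl (c, j), Sum.inl (c', j') =>
        c = c' ∧ j ≠ j' ∧
          ¬ (pairedNat j.val j'.val ∧ j.val < 2 * r - 2 ∧ j'.val < 2 * r - 2)
    | Sum.inl (_, j), Sum.inr s => j.val = s.val
    | Sum.inr s, Sum.inr s' => pairedNat s.val s'.val
    | _, _ => False)

def pr (a : ℕ) : ℕ := if a % 2 = 0 then a + 1 else a - 1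

lemma pairedNat_iff (a b : ℕ) : pairedNat a b ↔ b = pr a := by
  unfold pairedNat pr; split <;> omega

lemma pr_ne (a : ℕ) : pr a ≠ a := by unfold pr; split <;> omega

lemma pr_lt {a n : ℕ} (hn : n % 2 = 0) (h : a < n) : pr a < n := by
  unfold pr; split <;> omega

lemma pairedNat_symm {a b : ℕ} (h : pairedNat a b) : pairedNat b a :=
  ⟨h.1.symm, Ne.symm h.2⟩

variable {r : ℕ}

lemma adj_ll {c c' : Fin (2*r-1)} {j j' : Fin (2*r+1)} :
    (ConGraph r).Adj (Sum.inl (c,j)) (Sum.inl (c',j')) ↔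
      c = c' ∧ j ≠ j' ∧ ¬(pairedNat j.val j'.val ∧ j.val < 2*r-2 ∧ j'.val < 2*r-2) := by
  rw [ConGraph, SimpleGraph.fromRel_adj]
  constructor
  · rintro ⟨hne, h | h⟩
    · exact h
    · exact ⟨h.1.symm, Ne.symm h.2.1, fun ⟨hp, ha, hb⟩ => h.2.2 ⟨pairedNat_symm hp, hb, ha⟩⟩
  · rintro ⟨h1, h2, h3⟩
    exact ⟨by simp [h1, fun h : j = j' => h2 h], Or.inl ⟨h1, h2, h3⟩⟩

lemma adj_lr {c : Fin (2*r-1)} {j : Fin (2*r+1)} {t : Fin (2*r-2)} :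
    (ConGraph r).Adj (Sum.inl (c,j)) (Sum.inr t) ↔ j.val = t.val := by
  rw [ConGraph, SimpleGraph.fromRel_adj]
  constructor
  · rintro ⟨_, h | h⟩
    · exact h
    · exact h.elim
  · intro h; exact ⟨by simp, Or.inl h⟩

lemma adj_rl {c : Fin (2*r-1)} {j : Fin (2*r+1)} {t : Fin (2*r-2)} :
    (ConGraph r).Adj (Sum.inr t) (Sum.inl (c,j)) ↔ j.val = t.val := by
  rw [(ConGraph r).adj_comm]; exact adj_lr

lemma adj_rr {t t' : Fin (2*r-2)} :
    (ConGraph r).Adj (Sum.inr t) (Sum.inr t') ↔ pairedNat t.val t'.val := by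
  rw [ConGraph, SimpleGraph.fromRel_adj]
  constructor
  · rintro ⟨_, h | h⟩
    · exact h
    · exact pairedNat_symm h
  · intro h
    refine ⟨?_, Or.inl h⟩
    intro he; exact h.2 (by rw [Sum.inr.injEq] at he; exact congrArg Fin.val he)

lemma even_invol {α : Type*} [DecidableEq α] :
    ∀ n (s : Finset α), s.card = n → ∀ f : α → α,
    (∀ x ∈ s, f x ∈ s) → (∀ x ∈ s, f (f x) = x) → (∀ x ∈ s, f x ≠ x) → Even s.card := by
  intro n
  induction n using Nat.strong_induction_on with
  | _ n ih =>
    intro s hcard f hmem hinv hne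
    rcases s.eq_empty_or_nonempty with rfl | ⟨x, hx⟩
    · simp
    · have hfx := hmem x hx
      have hxne := hne x hx
      have hfxmem : f x ∈ s.erase x := Finset.mem_erase.mpr ⟨hxne, hfx⟩
      set s' := (s.erase x).erase (f x) with hs'
      have hsub : s' ⊆ s := (Finset.erase_subset _ _).trans (Finset.erase_subset _ _)
      have hcard2 : 2 ≤ s.card := Finset.one_lt_card.mpr ⟨x, hx, f x, hfx, Ne.symm hxne⟩
      have hcard' : s'.card = s.card - 2 := by
        rw [hs', Finset.card_erase_of_mem hfxmem, Finset.card_erase_of_mem hx]; omega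
      have hmem' : ∀ y ∈ s', f y ∈ s' := by
        intro y hy
        have hys : y ∈ s := hsub hy
        obtain ⟨hyfx, hy2⟩ := Finset.mem_erase.mp hy
        obtain ⟨hyx, _⟩ := Finset.mem_erase.mp hy2
        refine Finset.mem_erase.mpr ⟨?_, Finset.mem_erase.mpr ⟨?_, hmem y hys⟩⟩
        · intro h
          exact hyx (by rw [← hinv y hys, h, hinv x hx])
        · intro h
          exact hyfx (by rw [← hinv y hys, h])
      have hE : Even s'.card :=
        ih (s.card - 2) (by omega) s' hcard' f hmem'
          (fun y hy => hinv y (hsub hy)) (fun y hy => hne y (hsub hy))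
      rw [hcard'] at hE
      rcases hE with ⟨k, hk⟩
      exact ⟨k + 1, by omega⟩

lemma part1 (hr : 2 ≤ r) : ∀ v : ConVert r, ({u | (ConGraph r).Adj v u}).ncard = 2*r := by
  have h2r2 : (2*r-2) % 2 = 0 := by omega
  rintro (⟨c, j⟩ | t)
  · by_cases hj : j.val < 2*r-2
    · have hprlt2 : pr j.val < 2*r-2 := pr_lt h2r2 hj
      have hprlt : pr j.val < 2*r+1 := by omega
      set pj : Fin (2*r+1) := ⟨pr j.val, hprlt⟩ with hpj
      have hiff : ∀ j' : Fin (2*r+1),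
          (j ≠ j' ∧ ¬(pairedNat j.val j'.val ∧ j.val < 2*r-2 ∧ j'.val < 2*r-2)) ↔
          (j' ≠ j ∧ j' ≠ pj) := by
        intro j'
        rw [pairedNat_iff]
        constructor
        · rintro ⟨h1, h2⟩
          refine ⟨Ne.symm h1, fun h => h2 ⟨?_, hj, ?_⟩⟩
          · rw [h]
          · rw [h]; exact hprlt2
        · rintro ⟨h1, h2⟩
          exact ⟨Ne.symm h1, fun ⟨hp, _, _⟩ => h2 (Fin.ext hp)⟩
      have hset : {u | (ConGraph r).Adj (Sum.inl (c,j)) u} =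
          ↑(((Finset.univ.erase j).erase pj).image (fun j' => (Sum.inl (c, j') : ConVert r)) ∪
            {Sum.inr (⟨j.val, hj⟩ : Fin (2*r-2))}) := by
        ext u
        rcases u with (⟨c', j'⟩ | t')
        · simp only [Set.mem_setOf_eq, adj_ll, Finset.coe_union, Set.mem_union,
            Finset.coe_image, Set.mem_image, Finset.mem_coe, Finset.mem_erase,
            Finset.mem_univ, and_true, Finset.coe_singleton, Set.mem_singleton_iff,
            Sum.inl.injEq, Prod.mk.injEq, reduceCtorEq, or_false]
          constructor
          · rintro ⟨rfl, hrest⟩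
            obtain ⟨h1, h2⟩ := (hiff j').mp hrest
            exact ⟨j', ⟨h2, h1⟩, rfl, rfl⟩
          · rintro ⟨j'', ⟨hne_p, hne_j⟩, rfl, rfl⟩
            exact ⟨rfl, (hiff j'').mpr ⟨hne_j, hne_p⟩⟩
        · simp only [Set.mem_setOf_eq, adj_lr, Finset.coe_union, Set.mem_union,
            Finset.coe_image, Set.mem_image, Finset.mem_coe, Finset.coe_singleton,
            Set.mem_singleton_iff, Sum.inr.injEq, reduceCtorEq]
          constructor
          · intro h
            exact Or.inr (Fin.ext h.symm)
          · rintro (⟨j'', _, h⟩ | h)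
            · exact absurd h (by simp)
            · rw [h]
      rw [hset, Set.ncard_coe_finset,
        Finset.card_union_of_disjoint (by simp),
        Finset.card_image_of_injective _ (fun a b h => by simpa using h),
        Finset.card_erase_of_mem
          (Finset.mem_erase.mpr ⟨Fin.ne_of_val_ne (pr_ne j.val), Finset.mem_univ _⟩),
        Finset.card_erase_of_mem (Finset.mem_univ _), Finset.card_univ, Fintype.card_fin,
        Finset.card_singleton]
      omega
    · have hset : {u | (ConGraph r).Adj (Sum.inl (c,j)) u} =
          ↑((Finset.univ.erase j).image (fun j' => (Sum.inl (c, j') : ConVert r))) := by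
        ext u
        rcases u with (⟨c', j'⟩ | t')
        · simp only [Set.mem_setOf_eq, adj_ll, Finset.coe_image, Set.mem_image,
            Finset.mem_coe, Finset.mem_erase, Finset.mem_univ, and_true,
            Sum.inl.injEq, Prod.mk.injEq]
          constructor
          · rintro ⟨rfl, hne, _⟩; exact ⟨j', Ne.symm hne, rfl, rfl⟩
          · rintro ⟨j'', hne, rfl, rfl⟩
            exact ⟨rfl, Ne.symm hne, fun ⟨hp, hlt, _⟩ => hj hlt⟩
        · simp only [Set.mem_setOf_eq, adj_lr, Finset.coe_image, Set.mem_image, Finset.mem_coe]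
          constructor
          · intro h; exact absurd h (by have := t'.isLt; omega)
          · rintro ⟨j'', _, h⟩; exact absurd h (by simp)
      rw [hset, Set.ncard_coe_finset,
        Finset.card_image_of_injective _ (fun a b h => by simpa using h),
        Finset.card_erase_of_mem (Finset.mem_univ _), Finset.card_univ, Fintype.card_fin]
      omega
  · have htlt : t.val < 2*r+1 := by have := t.isLt; omega
    have hprlt2 : pr t.val < 2*r-2 := pr_lt h2r2 t.isLt
    have hset : {u | (ConGraph r).Adj (Sum.inr t) u} =
        ↑((Finset.univ.image fun c' => (Sum.inl (c', (⟨t.val, htlt⟩ : Fin (2*r+1))) : ConVert r)) ∪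
          {Sum.inr (⟨pr t.val, hprlt2⟩ : Fin (2*r-2))}) := by
      ext u
      rcases u with (⟨c', j'⟩ | t')
      · simp only [Set.mem_setOf_eq, adj_rl, Finset.coe_union, Set.mem_union, Finset.coe_image,
          Set.mem_image, Finset.mem_coe, Finset.mem_univ, true_and, Finset.coe_singleton,
          Set.mem_singleton_iff, Sum.inl.injEq, Prod.mk.injEq, reduceCtorEq, or_false]
        constructor
        · intro h; exact ⟨c', rfl, Fin.ext h.symm⟩
        · rintro ⟨c'', rfl, rfl⟩; rfl
      · simp only [Set.mem_setOf_eq, adj_rr, Finset.coe_union, Set.mem_union, Finset.coe_image,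
          Set.mem_image, Finset.mem_coe, Finset.coe_singleton, Set.mem_singleton_iff,
          Sum.inr.injEq, reduceCtorEq]
        rw [pairedNat_iff]
        constructor
        · intro h; exact Or.inr (Fin.ext h)
        · rintro (⟨c'', _, h⟩ | h)
          · exact absurd h (by simp)
          · rw [h]
    rw [hset, Set.ncard_coe_finset, Finset.card_union_of_disjoint (by simp),
      Finset.card_image_of_injective _ (fun a b h => by simpa using h),
      Finset.card_univ, Fintype.card_fin, Finset.card_singleton]
    omega


lemma part2 (hr : 2 ≤ r) (s : Fin (2 * r - 2)) :
    ¬ HasFactorDel (ConGraph r) (Sum.inr s) 1 := by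
  rintro ⟨F, hF, hdeg⟩
  classical
  have hpart : ∀ x : {v : ConVert r | v ≠ Sum.inr s}, ∃ y, {u | F.Adj x u} = {y} :=
    fun x => Set.ncard_eq_one.mp (hdeg x)
  choose p hp using hpart
  have hadj : ∀ x, F.Adj x (p x) := by
    intro x
    have : p x ∈ {u | F.Adj x u} := by rw [hp x]; exact rfl
    exact this
  have huniq : ∀ x y, F.Adj x y → y = p x := by
    intro x y h
    have : y ∈ {u | F.Adj x u} := h
    rwa [hp x, Set.mem_singleton_iff] at this
  have hinv : ∀ x, p (p x) = x := fun x => (huniq (p x) x (hadj x).symm).symm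
  have hnefix : ∀ x, p x ≠ x := fun x h => F.irrefl (h ▸ hadj x)
  have hle : ∀ x y : {v : ConVert r | v ≠ Sum.inr s},
      F.Adj x y → (ConGraph r).Adj x.val y.val := fun x y h => hF h
  have hlne : ∀ (c : Fin (2*r-1)) (j : Fin (2*r+1)),
      (Sum.inl (c,j) : ConVert r) ∈ {v : ConVert r | v ≠ Sum.inr s} := by
    intro c j; simp
  let T : Fin (2*r-1) → Finset {v : ConVert r | v ≠ Sum.inr s} := fun c =>
    Finset.univ.image (fun j : Fin (2*r+1) => ⟨Sum.inl (c,j), hlne c j⟩)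
  have hTmem : ∀ c x, x ∈ T c ↔ ∃ j, x.val = Sum.inl (c,j) := by
    intro c x
    simp only [T, Finset.mem_image, Finset.mem_univ, true_and, Subtype.ext_iff]
    constructor
    · rintro ⟨j, hj⟩; exact ⟨j, hj ▸ rfl⟩
    · rintro ⟨j, hj⟩; exact ⟨j, hj.symm⟩
  have hTcard : ∀ c, (T c).card = 2*r+1 := by
    intro c
    rw [Finset.card_image_of_injective _ (fun a b h => by simpa [Subtype.ext_iff] using h),
      Finset.card_univ, Fintype.card_fin]
  have key : ∀ c, ∃ x : {v : ConVert r | v ≠ Sum.inr s},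
      (∃ j, x.val = Sum.inl (c,j)) ∧ ∃ t, (p x).val = Sum.inr t := by
    intro c
    by_contra hcon
    push_neg at hcon
    have hmap : ∀ x ∈ T c, p x ∈ T c := by
      intro x hx
      obtain ⟨j, hj⟩ := (hTmem c x).mp hx
      have hadj' := hle x (p x) (hadj x)
      rw [hj] at hadj'
      rcases hpx : (p x).val with cj | t
      · obtain ⟨c', j'⟩ := cj
        rw [hpx, adj_ll] at hadj'
        exact (hTmem c (p x)).mpr ⟨j', by rw [hpx, ← hadj'.1]⟩
      · exact absurd hpx (hcon x ⟨j, hj⟩ t)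
    have heven := even_invol ((T c).card) (T c) rfl p hmap
      (fun x _ => hinv x) (fun x _ => hnefix x)
    rw [hTcard c] at heven
    rcases heven with ⟨k, hk⟩
    omega
  choose xx hxx1 hxx2 using key
  choose jj hjj using hxx1
  choose tt htt using hxx2
  have hinj : Function.Injective tt := by
    intro c c' h
    have h2 : p (xx c) = p (xx c') := Subtype.ext (by rw [htt c, htt c', h])
    have h3 : xx c = xx c' := by
      have := congrArg p h2
      rwa [hinv, hinv] at this
    have h4 := hjj c
    rw [h3, hjj c'] at h4
    have h5 := (Sum.inl.injEq _ _).mp h4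
    exact ((Prod.ext_iff.mp h5).1).symm
  have hcard := Fintype.card_le_of_injective tt hinj
  rw [Fintype.card_fin, Fintype.card_fin] at hcard
  omega


/-- The construction `H` is `2r`-regular, and for every vertex `v` of `S`,
`H - v` has no 1-factor. -/
theorem lower_bound_sharp (r : ℕ) (hr : 2 ≤ r) :
    IsRegularDeg (ConGraph r) (2 * r) ∧
    ∀ s : Fin (2 * r - 2), ¬ HasFactorDel (ConGraph r) (Sum.inr s) 1 :=
  ⟨fun v => part1 hr v, fun s => part2 hr s⟩
end
end

section
/- Let G be a 2r-regular graph of odd order with vertex u, H = G - u, and let k, m be integers with 2 \leq k \leq m < r and G 2m-edge-connected. Suppose D, S are disjoint subsets of V(H) with q = q_H(D,S;k) components counted and |D| > |S|, satisfying q + \sum_{x \in S}(k - d_{H-D}(x)) \geq k|D| + 2. Then q \geq k + 2 and |D| - |S| \geq (m/r)q - 1 - (1/r)\sum_{x \in S} d_{H-D}(x). -/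
noncomputable section

open Finset

universe u

variable {V : Type u}

section Aux

open SimpleGraph

lemma reach_closed {G' : SimpleGraph V} {A : Set V}
    (h : ∀ a b, G'.Adj a b → a ∈ A → b ∈ A) {x y : V} (hxy : G'.Reachable x y)
    (hx : x ∈ A) : y ∈ A := by
  obtain ⟨w⟩ := hxy
  induction w with
  | nil => exact hx
  | cons hadj _ ih => exact ih (h _ _ hadj hx)

lemma cut_lower {G : SimpleGraph V} {ℓ : ℕ}
    (hec : EdgeConnected G ℓ) {A : Set V} (hA : A.Nonempty) (hA' : Aᶜ.Nonempty) :
    ℓ ≤ {e : Sym2 V | ∃ a b, e = s(a, b) ∧ G.Adj a b ∧ a ∈ A ∧ b ∉ A}.ncard := by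
  classical
  set F := {e : Sym2 V | ∃ a b, e = s(a, b) ∧ G.Adj a b ∧ a ∈ A ∧ b ∉ A} with hF
  by_contra hcon
  push_neg at hcon
  have hFsub : F ⊆ G.edgeSet := by
    rintro e ⟨a, b, rfl, hadj, -, -⟩
    exact hadj
  have hconn := hec.2 F hFsub hcon
  obtain ⟨a, ha⟩ := hA
  obtain ⟨b, hb⟩ := hA'
  have hreach := hconn.preconnected a b
  have : b ∈ A := by
    refine reach_closed (fun x y hxy hx => ?_) hreach ha
    rw [deleteEdges_adj] at hxy
    by_contra hy
    exact hxy.2 ⟨x, y, rfl, hxy.1, hx, hy⟩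
  exact hb this

lemma ncard_setOf_eq_card_filter {α : Type*} [Fintype α] (p : α → Prop) [DecidablePred p] :
    {x | p x}.ncard = (Finset.univ.filter p).card := by
  rw [Set.ncard_eq_toFinset_card', Set.toFinset_setOf]

end Aux


open SimpleGraph in
lemma key_bound {V : Type u} [Fintype V] (r m k : ℕ) (G : SimpleGraph V)
    (hreg : IsRegularDeg G (2 * r)) (hec : EdgeConnected G (2 * m)) (u : V)
    (D S : Set ↥{v : V | v ≠ u}) (hDS : Disjoint D S) :
    2 * m * (qCount (G.induce {v : V | v ≠ u}) D S k) + 2 * r * S.ncard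
      ≤ 2 * r * (D.ncard + 1)
        + 2 * ∑ x ∈ S.toFinite.toFinset, degDel (G.induce {v : V | v ≠ u}) D x := by
  classical
  set H := G.induce {v : V | v ≠ u} with hHdef
  set K := H.induce (D ∪ S)ᶜ with hKdef
  set D' : Set V := Subtype.val '' D with hD'def
  set S' : Set V := Subtype.val '' S with hS'def
  set T : Set V := insert u (D' ∪ S') with hTdef
  set Df : Finset V := D'.toFinite.toFinset with hDfdef
  set Sf : Finset V := S'.toFinite.toFinset with hSfdef
  set Uf : Finset V := insert u Df with hUfdef
  set Tf : Finset V := T.toFinite.toFinset with hTfdef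
  set Sfin : Finset ↥{v : V | v ≠ u} := S.toFinite.toFinset with hSfindef
  set nbr : V → Finset V := fun v => Finset.univ.filter (fun b => G.Adj v b) with hnbrdef
  set out : V → Finset V := fun v => Finset.univ.filter (fun b => G.Adj v b ∧ b ∉ T)
    with houtdef
  set inS : V → Finset V := fun v => Finset.univ.filter (fun b => G.Adj v b ∧ b ∈ S')
    with hinSdef
  set inU : V → Finset V := fun v => Finset.univ.filter
    (fun b => G.Adj v b ∧ b ∈ insert u D') with hinUdef
  set del : ↥{v : V | v ≠ u} → Finset V := fun x => Finset.univ.filter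
    (fun b => G.Adj ↑x b ∧ b ∉ insert u D') with hdeldef
  -- basic membership facts
  have hmemD' : ∀ a ∈ D', a ≠ u := by
    rintro a ⟨z, hz, rfl⟩
    exact z.2
  have hmemS' : ∀ a ∈ S', a ≠ u := by
    rintro a ⟨z, hz, rfl⟩
    exact z.2
  have hDScap : ∀ a, a ∈ D' → a ∈ S' → False := by
    rintro a ⟨z, hz, rfl⟩ ⟨w, hw, hwz⟩
    have : w = z := Subtype.val_injective hwz
    exact (Set.disjoint_left.mp hDS hz) (this ▸ hw)
  -- degrees
  have hdeg : ∀ v, (nbr v).card = 2 * r := by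
    intro v
    have := hreg v
    rwa [deg, ncard_setOf_eq_card_filter] at this
  -- degDel as a filter card in V
  have hdegDel : ∀ x : ↥{v : V | v ≠ u}, degDel H D x = (del x).card := by
    intro x
    have himg : Subtype.val '' {y : ↥{v : V | v ≠ u} | H.Adj x y ∧ y ∉ D}
        = {b : V | G.Adj ↑x b ∧ b ∉ insert u D'} := by
      ext b
      constructor
      · rintro ⟨y, ⟨hadj, hyD⟩, rfl⟩
        refine ⟨hadj, ?_⟩
        rintro (h | ⟨z, hz, hzval⟩)
        · exact y.2 h
        · exact hyD ((Subtype.val_injective hzval) ▸ hz)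
      · rintro ⟨hadj, hbT⟩
        have hbu : b ≠ u := fun h => hbT (h ▸ Set.mem_insert u D')
        refine ⟨⟨b, hbu⟩, ⟨hadj, ?_⟩, rfl⟩
        intro hD
        exact hbT (Set.mem_insert_of_mem _ ⟨⟨b, hbu⟩, hD, rfl⟩)
    have := Set.ncard_image_of_injective {y : ↥{v : V | v ≠ u} | H.Adj x y ∧ y ∉ D}
      (Subtype.val_injective)
    rw [himg] at this
    rw [degDel, ← this, ncard_setOf_eq_card_filter]
  -- boundary
  set bd : Finset (Sym2 V) := Finset.univ.filter
    (fun e => ∃ a b, e = s(a, b) ∧ G.Adj a b ∧ a ∈ T ∧ b ∉ T) with hbddef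
  -- C1 : boundary bounded by sum of out-degrees over T
  have hC1 : bd.card ≤ ∑ v ∈ Tf, (out v).card := by
    have hsub : bd ⊆ Tf.biUnion (fun v => (out v).image (fun b => s(v, b))) := by
      intro e he
      rw [hbddef, Finset.mem_filter] at he
      obtain ⟨-, a, b, rfl, hadj, haT, hbT⟩ := he
      rw [Finset.mem_biUnion]
      refine ⟨a, by rw [hTfdef, Set.Finite.mem_toFinset]; exact haT, ?_⟩
      rw [Finset.mem_image]
      exact ⟨b, by simp [houtdef, hadj, hbT], rfl⟩
    calc bd.card ≤ _ := Finset.card_le_card hsub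
      _ ≤ ∑ v ∈ Tf, ((out v).image (fun b => s(v, b))).card := Finset.card_biUnion_le
      _ ≤ ∑ v ∈ Tf, (out v).card := Finset.sum_le_sum fun v _ => Finset.card_image_le
  -- splitting T
  have hTf_eq : Tf = Uf ∪ Sf := by
    ext a
    simp only [hTfdef, hUfdef, hSfdef, hDfdef, Set.Finite.mem_toFinset, hTdef,
      Set.mem_insert_iff, Set.mem_union, Finset.mem_union, Finset.mem_insert]
    tauto
  have hUS_disj : Disjoint Uf Sf := by
    rw [Finset.disjoint_left]
    intro a ha haS
    rw [hSfdef, Set.Finite.mem_toFinset] at haS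
    rw [hUfdef, Finset.mem_insert, hDfdef, Set.Finite.mem_toFinset] at ha
    rcases ha with rfl | ha
    · exact hmemS' a haS rfl
    · exact hDScap a ha haS
  have hsplit : ∑ v ∈ Tf, (out v).card
      = ∑ v ∈ Uf, (out v).card + ∑ v ∈ Sf, (out v).card := by
    rw [hTf_eq, Finset.sum_union hUS_disj]
  -- S-side bound
  have hSf_img : Sf = Sfin.image Subtype.val := by
    ext a
    simp only [hSfdef, hSfindef, hS'def, Set.Finite.mem_toFinset, Finset.mem_image,
      Set.mem_image]
  have hDbound : ∑ v ∈ Sf, (out v).card ≤ ∑ x ∈ Sfin, degDel H D x := by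
    rw [hSf_img, Finset.sum_image (fun x _ y _ h => Subtype.val_injective h)]
    refine Finset.sum_le_sum fun x _ => ?_
    rw [hdegDel x]
    apply Finset.card_le_card
    intro b hb
    rw [houtdef, Finset.mem_filter] at hb
    obtain ⟨-, hadj, hbT⟩ := hb
    rw [hdeldef, Finset.mem_filter]
    refine ⟨Finset.mem_univ b, hadj, ?_⟩
    rintro (rfl | hbD)
    · exact hbT (Set.mem_insert _ _)
    · exact hbT (Set.mem_insert_of_mem _ (Set.mem_union_left _ hbD))
  -- cardinalities
  have hDfcard : Df.card = D.ncard := by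
    rw [hDfdef, ← Set.ncard_eq_toFinset_card D' D'.toFinite, hD'def,
      Set.ncard_image_of_injective _ Subtype.val_injective]
  have huDf : u ∉ Df := by
    rw [hDfdef, Set.Finite.mem_toFinset]
    intro h
    exact hmemD' u h rfl
  have hUfcard : Uf.card = D.ncard + 1 := by
    rw [hUfdef, Finset.card_insert_of_notMem huDf, hDfcard]
  have hSfincard : Sfin.card = S.ncard := (Set.ncard_eq_toFinset_card S S.toFinite).symm
  -- U-side bound
  have hEbound : ∑ v ∈ Uf, ((out v).card + (inS v).card) ≤ 2 * r * (D.ncard + 1) := by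
    have hpt : ∀ v, (out v).card + (inS v).card ≤ 2 * r := by
      intro v
      have hdisj : Disjoint (out v) (inS v) := by
        rw [Finset.disjoint_left]
        intro b hb hb'
        rw [houtdef, Finset.mem_filter] at hb
        rw [hinSdef, Finset.mem_filter] at hb'
        exact hb.2.2 (Set.mem_insert_of_mem _ (Set.mem_union_right _ hb'.2.2))
      rw [← Finset.card_union_of_disjoint hdisj, ← hdeg v]
      apply Finset.card_le_card
      intro b hb
      rw [Finset.mem_union, houtdef, hinSdef, Finset.mem_filter, Finset.mem_filter] at hb
      rw [hnbrdef, Finset.mem_filter]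
      rcases hb with hb | hb
      · exact ⟨hb.1, hb.2.1⟩
      · exact ⟨hb.1, hb.2.1⟩
    calc ∑ v ∈ Uf, ((out v).card + (inS v).card) ≤ ∑ _v ∈ Uf, 2 * r :=
          Finset.sum_le_sum fun v _ => hpt v
      _ = 2 * r * (D.ncard + 1) := by rw [Finset.sum_const, hUfcard, smul_eq_mul, mul_comm]
  -- double counting
  have hF : ∑ v ∈ Uf, (inS v).card = ∑ x ∈ Sfin, (inU ↑x).card := by
    have h1 : ∀ v, (inS v).card = ∑ b ∈ Sf, (if G.Adj v b then 1 else 0) := by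
      intro v
      rw [← Finset.card_filter]
      congr 1
      ext b
      simp only [hinSdef, hSfdef, Finset.mem_filter, Set.Finite.mem_toFinset,
        Finset.mem_univ, true_and]
      tauto
    have h2 : ∀ b, (inU b).card = ∑ v ∈ Uf, (if G.Adj v b then 1 else 0) := by
      intro b
      rw [← Finset.card_filter]
      congr 1
      ext a
      simp only [hinUdef, hUfdef, hDfdef, Finset.mem_filter, Finset.mem_insert,
        Set.Finite.mem_toFinset, Finset.mem_univ, true_and, Set.mem_insert_iff]
      constructor
      · rintro ⟨hadj, h⟩
        exact ⟨h, hadj.symm⟩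
      · rintro ⟨h, hadj⟩
        exact ⟨hadj.symm, h⟩
    calc ∑ v ∈ Uf, (inS v).card = ∑ v ∈ Uf, ∑ b ∈ Sf, (if G.Adj v b then 1 else 0) := by
          simp_rw [h1]
      _ = ∑ b ∈ Sf, ∑ v ∈ Uf, (if G.Adj v b then 1 else 0) := Finset.sum_comm
      _ = ∑ b ∈ Sf, (inU b).card := by simp_rw [h2]
      _ = ∑ x ∈ Sfin, (inU ↑x).card := by
          rw [hSf_img, Finset.sum_image (fun x _ y _ h => Subtype.val_injective h)]
  -- S-side degree identity
  have hG : ∑ x ∈ Sfin, (inU ↑x).card + ∑ x ∈ Sfin, degDel H D x = 2 * r * S.ncard := by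
    rw [← Finset.sum_add_distrib]
    have hpt : ∀ x : ↥{v : V | v ≠ u}, (inU ↑x).card + degDel H D x = 2 * r := by
      intro x
      rw [hdegDel x, ← hdeg ↑x]
      have e1 : inU ↑x = (nbr ↑x).filter (fun b => b ∈ insert u D') := by
        rw [hinUdef, hnbrdef, Finset.filter_filter]
      have e2 : del x = (nbr ↑x).filter (fun b => ¬ b ∈ insert u D') := by
        rw [hdeldef, hnbrdef, Finset.filter_filter]
      rw [e1, e2, Finset.card_filter_add_card_filter_not]
    rw [Finset.sum_congr rfl (fun x _ => hpt x), Finset.sum_const, hSfincard,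
      smul_eq_mul, mul_comm]
  -- components
  have hq : qCount H D S k = ({C : K.ConnectedComponent |
      Odd (eBetween H (Subtype.val '' C.supp) S + k * (Subtype.val '' C.supp).ncard)} :
      Set K.ConnectedComponent).toFinite.toFinset.card := by
    rw [qCount, Set.ncard_eq_toFinset_card _ (Set.toFinite _)]
  set Qf := ({C : K.ConnectedComponent |
      Odd (eBetween H (Subtype.val '' C.supp) S + k * (Subtype.val '' C.supp).ncard)} :
      Set K.ConnectedComponent).toFinite.toFinset with hQfdef
  set A : K.ConnectedComponent → Set V :=
    fun C => Subtype.val '' (Subtype.val '' C.supp) with hAdef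
  set Fc : K.ConnectedComponent → Finset (Sym2 V) := fun C => Finset.univ.filter
    (fun e => ∃ a b, e = s(a, b) ∧ G.Adj a b ∧ a ∈ A C ∧ b ∉ A C) with hFcdef
  have hH1 : ∀ C a, a ∈ A C → a ∉ T := by
    rintro C a ⟨y, ⟨x, hx, rfl⟩, rfl⟩
    rintro (h | ⟨z, hz, hzval⟩ | ⟨z, hz, hzval⟩)
    · exact (↑x : ↥{v : V | v ≠ u}).2 h
    · exact x.2 (Set.mem_union_left _ ((Subtype.val_injective hzval) ▸ hz))
    · exact x.2 (Set.mem_union_right _ ((Subtype.val_injective hzval) ▸ hz))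
  have hH2 : ∀ C a b, a ∈ A C → G.Adj a b → b ∉ T → b ∈ A C := by
    rintro C a b ⟨y, ⟨x, hx, rfl⟩, rfl⟩ hadj hbT
    have hbu : b ≠ u := fun h => hbT (h ▸ Set.mem_insert u _)
    have hbD : (⟨b, hbu⟩ : ↥{v : V | v ≠ u}) ∉ D ∪ S := by
      rintro (h | h)
      · exact hbT (Set.mem_insert_of_mem _ (Set.mem_union_left _ ⟨_, h, rfl⟩))
      · exact hbT (Set.mem_insert_of_mem _ (Set.mem_union_right _ ⟨_, h, rfl⟩))
    have hadjK : K.Adj x ⟨⟨b, hbu⟩, hbD⟩ := hadj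
    have hy : (⟨⟨b, hbu⟩, hbD⟩ : ↥((D ∪ S)ᶜ : Set ↥{v : V | v ≠ u})) ∈ C.supp := by
      rw [SimpleGraph.ConnectedComponent.mem_supp_iff] at hx ⊢
      rw [← hx]
      exact SimpleGraph.ConnectedComponent.sound hadjK.symm.reachable
    exact ⟨⟨b, hbu⟩, ⟨⟨⟨b, hbu⟩, hbD⟩, hy, rfl⟩, rfl⟩
  have hH3 : ∀ C1 C2 a, a ∈ A C1 → a ∈ A C2 → C1 = C2 := by
    rintro C1 C2 a ⟨y, ⟨x, hx, rfl⟩, rfl⟩ ⟨y', ⟨x', hx', rfl⟩, hval⟩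
    have : x' = x := Subtype.val_injective (Subtype.val_injective hval)
    rw [SimpleGraph.ConnectedComponent.mem_supp_iff] at hx hx'
    rw [← hx, ← hx', this]
  have hH4 : ∀ C : K.ConnectedComponent, 2 * m ≤ (Fc C).card := by
    intro C
    obtain ⟨x, hx⟩ := C.exists_rep
    have hAne : (A C).Nonempty :=
      ⟨↑↑x, ⟨↑x, ⟨x, by rw [SimpleGraph.ConnectedComponent.mem_supp_iff]; exact hx, rfl⟩, rfl⟩⟩
    have hAcne : (A C)ᶜ.Nonempty := ⟨u, fun h => hH1 C u h (Set.mem_insert u _)⟩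
    have := cut_lower hec hAne hAcne
    rwa [ncard_setOf_eq_card_filter] at this
  have hH5 : ∀ C : K.ConnectedComponent, Fc C ⊆ bd := by
    intro C e he
    rw [hFcdef, Finset.mem_filter] at he
    obtain ⟨-, a, b, rfl, hadj, haA, hbA⟩ := he
    have hbT : b ∈ T := by
      by_contra hbT
      exact hbA (hH2 C a b haA hadj hbT)
    rw [hbddef, Finset.mem_filter]
    exact ⟨Finset.mem_univ _, b, a, Sym2.eq_swap, hadj.symm, hbT, hH1 C a haA⟩
  have hH6 : ∀ C1 ∈ Qf, ∀ C2 ∈ Qf, C1 ≠ C2 → Disjoint (Fc C1) (Fc C2) := by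
    intro C1 _ C2 _ hne
    rw [Finset.disjoint_left]
    intro e he1 he2
    rw [hFcdef, Finset.mem_filter] at he1 he2
    obtain ⟨-, a, b, rfl, hadj, haA, hbA⟩ := he1
    obtain ⟨-, a', b', heq, hadj', haA', hbA'⟩ := he2
    rcases Sym2.eq_iff.mp heq with ⟨rfl, rfl⟩ | ⟨rfl, rfl⟩
    · exact hne (hH3 C1 C2 a haA haA')
    · exact hbA (hH2 C1 a b haA hadj (hH1 C2 b haA'))
  have hH7 : 2 * m * qCount H D S k ≤ bd.card := by
    calc 2 * m * qCount H D S k = ∑ _C ∈ Qf, 2 * m := by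
          rw [Finset.sum_const, hq, smul_eq_mul, mul_comm]
      _ ≤ ∑ C ∈ Qf, (Fc C).card := Finset.sum_le_sum fun C _ => hH4 C
      _ = (Qf.biUnion Fc).card := (Finset.card_biUnion hH6).symm
      _ ≤ bd.card := Finset.card_le_card (Finset.biUnion_subset.mpr fun C _ => hH5 C)
  -- assemble
  have h7' := hH7.trans (hC1.trans_eq hsplit)
  have hE' : ∑ v ∈ Uf, (out v).card + ∑ v ∈ Uf, (inS v).card ≤ 2 * r * (D.ncard + 1) := by
    rw [← Finset.sum_add_distrib]
    exact hEbound
  rw [hF] at hE'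
  omega

/-- Deductions in Case (ii) of the main proof: under the stated hypotheses,
`q ≥ k + 2` and `|D| - |S| ≥ (m/r) q - 1 - (1/r) ∑_{x ∈ S} d_{H-D}(x)`. -/
theorem case_ii_inequalities {V : Type u} [Fintype V] (r k m : ℕ) (hk2 : 2 ≤ k)
    (hkm : k ≤ m) (hmr : m < r)
    (G : SimpleGraph V) (hreg : IsRegularDeg G (2 * r)) (hec : EdgeConnected G (2 * m))
    (hodd : Odd (Fintype.card V)) (u : V)
    (D S : Set ↥{v : V | v ≠ u}) (hDS : Disjoint D S)
    (hlt : S.ncard < D.ncard)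
    (h1 : (k : ℤ) * D.ncard + 2 ≤ (qCount (G.induce {v : V | v ≠ u}) D S k : ℤ)
        + ∑ x ∈ S.toFinite.toFinset,
            ((k : ℤ) - degDel (G.induce {v : V | v ≠ u}) D x)) :
    k + 2 ≤ qCount (G.induce {v : V | v ≠ u}) D S k ∧
    ((m : ℚ) / r) * qCount (G.induce {v : V | v ≠ u}) D S k - 1
        - (1 / r) * ∑ x ∈ S.toFinite.toFinset,
            (degDel (G.induce {v : V | v ≠ u}) D x : ℚ)
      ≤ (D.ncard : ℚ) - S.ncard := by
  classical
  set H := G.induce {v : V | v ≠ u} with hHdef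
  set q := qCount H D S k with hqdef
  set Sf : Finset ↥{v : V | v ≠ u} := S.toFinite.toFinset with hSfdef
  set Sig : ℕ := ∑ x ∈ Sf, degDel H D x with hSigdef
  set d := D.ncard with hddef
  set s := S.ncard with hsdef
  -- Part 1
  have hcardS : Sf.card = s := (Set.ncard_eq_toFinset_card S S.toFinite).symm
  have hsum1 : ∑ x ∈ Sf, ((k : ℤ) - degDel H D x) = (k : ℤ) * s - Sig := by
    rw [Finset.sum_sub_distrib, Finset.sum_const, hSigdef, Nat.cast_sum, hcardS,
      nsmul_eq_mul, mul_comm]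
  rw [hsum1] at h1
  have hds : (s : ℤ) + 1 ≤ (d : ℤ) := by exact_mod_cast hlt
  have part1 : k + 2 ≤ q := by
    have hSig0 : (0 : ℤ) ≤ (Sig : ℤ) := Int.ofNat_nonneg _
    have hk0 : (0 : ℤ) ≤ (k : ℤ) := Int.ofNat_nonneg _
    have : (k : ℤ) + 2 ≤ (q : ℤ) := by nlinarith
    exact_mod_cast this
  refine ⟨part1, ?_⟩
  -- Part 2 : key combinatorial inequality
  have key : 2 * m * q + 2 * r * s ≤ 2 * r * (d + 1) + 2 * Sig :=
    key_bound r m k G hreg hec u D S hDS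
  -- conclude over ℚ
  have hr : (0 : ℚ) < (r : ℚ) := by
    have : 0 < r := by omega
    exact_mod_cast this
  have keyQ : 2 * (m : ℚ) * q + 2 * r * s ≤ 2 * r * (d + 1) + 2 * Sig := by
    exact_mod_cast key
  have hsumQ : ∑ x ∈ Sf, (degDel H D x : ℚ) = (Sig : ℚ) := by
    rw [hSigdef, Nat.cast_sum]
  rw [hsumQ]
  have hnum : (m : ℚ) * q - r - Sig ≤ r * ((d : ℚ) - s) := by linarith
  calc ((m : ℚ) / r) * q - 1 - (1 / r) * Sig
      = ((m : ℚ) * q - r - Sig) / r := by field_simp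
    _ ≤ (r * ((d : ℚ) - s)) / r := by gcongr
    _ = (d : ℚ) - s := mul_div_cancel_left₀ _ (ne_of_gt hr)
end
end
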